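/- arXiv:1105.5471 — 4 statements merged into one kernel-verified Lean document; each statement's English description precedes it below -/
import Mathlib

section
/- Let a be an amplitude of order m′ with m′ ≤ −4, and define a₂(s,x,y,p) := ∫_ℝ e^{isσ} a(s,x,y,p,σ) dσ (an absolutely convergent integral, since m′ ≤ −4). Then, as ħ → 0⁺, ∫_{ℝ^n} u_ħ(x,x) dx = (2π)^{1−n} ħ^{1−n} ∫_{ℝ^n × ℝ^{n−1}} a₂(0, x, x, (0,p′)) dx dp′ + O(ħ^{2−n}); that is, there are constants C > 0 and ħ₀ > 0 such that for all 0 < ħ ≤ ħ₀ the absolute value of the difference of the two sides is at most C ħ^{2−n}. (Here (0,p′) denotes the momentum variable p with first component p₁ = 0; the function (x,p′) ↦ a₂(0,x,x,(0,p′)) is continuous with compact support.) -/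
/-!
For `m' ≤ -4` no regularization is needed (`K = 0`), so on the diagonal
`u_ℏ(x,x) = (2πℏ)^{-(n+1)} ∫ e^{is(σ - p₁/ℏ)} a(s,x,x,p,σ) ds dp dσ`. The `s`-integral is the
Fourier transform `â` of `s ↦ a(s,x,x,p,σ)` at `(p₁/ℏ - σ)/2π`, and the substitution `p₁ = 2πℏu`
turns the `p₁`-integral into `2πℏ ∫ â_{p₁ = 2πℏu}(u - σ/2π) du`. Freezing `p₁ = 0` inside `â`, this
is `2πℏ a(0,x,x,(0,p'),σ)` by Fourier inversion, which is the main term. With `⟨σ⟩ = 1 + |σ|`,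
unfreezing costs `|â_{p₁} - â_0|(ξ) ≲ |p₁| ⟨σ⟩^{m'} ⟨ξ⟩^{-3}` (three `s`-derivatives give the decay
in `ξ`), and since `∫ |u| ⟨u - c⟩^{-3} du ≲ ⟨c⟩` the error is `O(ℏ²) ⟨σ⟩^{m'+1}`, integrable in `σ`
because `m' + 1 < -1`. Compact support in `(s, x, p)` makes all the remaining integrals finite.
-/

open MeasureTheory Real

noncomputable section

/-- An *amplitude of order `m'`* in dimension `n+1`: a smooth function
`a(s,x,y,p,σ)`, compactly supported in `(s,x,y,p)`, satisfying symbol estimates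
of order `m'` in `σ`. -/
def IsAmplitude (n : ℕ) (m' : ℝ)
    (a : (ℝ × (Fin (n+1) → ℝ) × (Fin (n+1) → ℝ) × (Fin (n+1) → ℝ)) → ℝ → ℂ) : Prop :=
  ContDiff ℝ (⊤ : ℕ∞)
      (fun q : (ℝ × (Fin (n+1) → ℝ) × (Fin (n+1) → ℝ) × (Fin (n+1) → ℝ)) × ℝ => a q.1 q.2) ∧
  (∃ K : Set (ℝ × (Fin (n+1) → ℝ) × (Fin (n+1) → ℝ) × (Fin (n+1) → ℝ)),
      IsCompact K ∧ ∀ w σ, w ∉ K → a w σ = 0) ∧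
  ∀ k γ : ℕ, ∃ C : ℝ,
    ∀ w σ, ‖iteratedFDeriv ℝ k (fun w' => iteratedDeriv γ (a w') σ) w‖
      ≤ C * (1 + |σ|) ^ (m' - (γ : ℝ))

/-- The operator `1 + D_s²` where `D_s = -i ∂/∂s`, i.e. `f ↦ f - f''`. -/
def oneAddDsq (f : ℝ → ℂ) : ℝ → ℂ := fun s => f s - deriv (deriv f) s

/-- The regularized integrand defining `u_ℏ`. -/
def oscIntegrand (n : ℕ)
    (a : (ℝ × (Fin (n+1) → ℝ) × (Fin (n+1) → ℝ) × (Fin (n+1) → ℝ)) → ℝ → ℂ)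
    (ℏ : ℝ) (x y : Fin (n+1) → ℝ) (K : ℕ) :
    ℝ × (Fin (n+1) → ℝ) × ℝ → ℂ :=
  fun q =>
    Complex.exp (Complex.I *
        Complex.ofReal (ℏ⁻¹ * (∑ i, (x i - y i) * q.2.1 i) + q.1 * q.2.2)) *
    (Complex.ofReal (1 + q.2.2 ^ 2))⁻¹ ^ K *
    (oneAddDsq^[K]
        (fun s => Complex.exp (-Complex.I * Complex.ofReal (ℏ⁻¹ * s * q.2.1 0)) *
          a (s, x, y, q.2.1) q.2.2)) q.1

/-- The kernel `u_ℏ(x,y)`, defined by the regularized oscillatory integral with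
the choice `K = ⌈m'/2 + 1⌉₊` (any integer `K ≥ m'/2 + 1` gives the same value). -/
def uh (n : ℕ) (m' : ℝ)
    (a : (ℝ × (Fin (n+1) → ℝ) × (Fin (n+1) → ℝ) × (Fin (n+1) → ℝ)) → ℝ → ℂ)
    (ℏ : ℝ) (x y : Fin (n+1) → ℝ) : ℂ :=
  Complex.ofReal ((2 * π * ℏ) ^ (-((n : ℤ) + 1))) *
    ∫ q, oscIntegrand n a ℏ x y (⌈m' / 2 + 1⌉₊) q


/-- `a₂(s,x,y,p) := ∫ e^{isσ} a(s,x,y,p,σ) dσ`. -/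
def aTwo (n : ℕ)
    (a : (ℝ × (Fin (n+1) → ℝ) × (Fin (n+1) → ℝ) × (Fin (n+1) → ℝ)) → ℝ → ℂ)
    (w : ℝ × (Fin (n+1) → ℝ) × (Fin (n+1) → ℝ) × (Fin (n+1) → ℝ)) : ℂ :=
  ∫ σ : ℝ, Complex.exp (Complex.I * Complex.ofReal (w.1 * σ)) * a w σ

open Complex FourierTransform Metric Function

namespace TraceAsymptotics

section Weight

def weight (m σ : ℝ) : ℝ := (1 + |σ|) ^ m

lemma weight_pos (m σ : ℝ) : 0 < weight m σ := by unfold weight; positivity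

lemma weight_nonneg (m σ : ℝ) : 0 ≤ weight m σ := (weight_pos m σ).le

lemma weight_le_one {m : ℝ} (hm : m ≤ 0) (σ : ℝ) : weight m σ ≤ 1 :=
  Real.rpow_le_one_of_one_le_of_nonpos (by simp) hm

lemma integrable_weight {m : ℝ} (hm : m < -1) : Integrable (weight m) := by
  have h := integrable_one_add_norm (E := ℝ) (μ := volume) (r := -m) (by simp; linarith)
  convert h using 1
  funext σ
  simp [weight]

lemma weight_mul_one_add_abs (m σ : ℝ) : weight m σ * (1 + |σ|) = weight (m + 1) σ :=
  (Real.rpow_add_one (by positivity) m).symm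

lemma weight_neg_three (ξ : ℝ) : weight (-3) ξ = ((1 + |ξ|) ^ 3)⁻¹ := by
  rw [weight, Real.rpow_neg (by positivity)]
  norm_cast

lemma abs_mul_weight_le (c u : ℝ) :
    |u| * weight (-3) (u - c) ≤ weight (-2) (u - c) + |c| * weight (-3) (u - c) := by
  have h : |u - c| * weight (-3) (u - c) ≤ weight (-2) (u - c) := by
    rw [show (-2 : ℝ) = -3 + 1 by norm_num, ← weight_mul_one_add_abs, mul_comm]
    gcongr
    · exact weight_nonneg _ _
    · linarith
  have := abs_sub_abs_le_abs_sub u c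
  nlinarith [weight_nonneg (-3) (u - c)]

lemma continuous_weight (m : ℝ) : Continuous (weight m) :=
  (continuous_const.add continuous_abs).rpow_const fun σ => Or.inl (by positivity : (1 + |σ|) ≠ 0)

lemma integrable_abs_mul_weight (c : ℝ) : Integrable fun u => |u| * weight (-3) (u - c) := by
  refine Integrable.mono'
    (((integrable_weight (m := -2) (by norm_num)).comp_sub_right c).add
      (((integrable_weight (m := -3) (by norm_num)).comp_sub_right c).const_mul |c|))
    (continuous_abs.mul ((continuous_weight _).comp (continuous_sub_right c))).aestronglyMeasurable
    (.of_forall fun u => ?_)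
  rw [Real.norm_of_nonneg (by have := weight_nonneg (-3) (u - c); positivity)]
  exact abs_mul_weight_le c u

lemma exists_integral_abs_mul_weight_le :
    ∃ K, 0 ≤ K ∧ ∀ c, ∫ u, |u| * weight (-3) (u - c) ≤ K * (1 + |c|) := by
  have h₂ : Integrable (weight (-2)) := integrable_weight (by norm_num)
  have h₃ : Integrable (weight (-3)) := integrable_weight (by norm_num)
  have hK₂ : 0 ≤ ∫ u, weight (-2) u := integral_nonneg (weight_nonneg _)
  have hK₃ : 0 ≤ ∫ u, weight (-3) u := integral_nonneg (weight_nonneg _)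
  refine ⟨(∫ u, weight (-2) u) + ∫ u, weight (-3) u, by positivity, fun c => ?_⟩
  calc ∫ u, |u| * weight (-3) (u - c)
      ≤ ∫ u, (weight (-2) (u - c) + |c| * weight (-3) (u - c)) :=
        integral_mono (integrable_abs_mul_weight c)
          ((h₂.comp_sub_right c).add ((h₃.comp_sub_right c).const_mul |c|))
          (abs_mul_weight_le c)
    _ = (∫ u, weight (-2) u) + |c| * ∫ u, weight (-3) u := by
        rw [integral_add (h₂.comp_sub_right c) ((h₃.comp_sub_right c).const_mul |c|),
          integral_const_mul, integral_sub_right_eq_self (weight (-2)) c,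
          integral_sub_right_eq_self (weight (-3)) c]
    _ ≤ _ := by nlinarith [abs_nonneg c]

end Weight

section FourierDecay

variable {E : Type*} [NormedAddCommGroup E] [NormedSpace ℂ E]

/-- The decay of `𝓕 g` is read off from `𝓕 (g''') ξ = (2πiξ)³ 𝓕 g ξ`. -/
theorem norm_fourier_le_weight {g : ℝ → E} (hg : ContDiff ℝ 3 g)
    (hint : ∀ k : ℕ, k ≤ 3 → Integrable (iteratedDeriv k g)) (ξ : ℝ) :
    ‖𝓕 g ξ‖ ≤ 4 * ((∫ s, ‖g s‖) + ∫ s, ‖iteratedDeriv 3 g s‖) * weight (-3) ξ := by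
  have h₀ : ‖𝓕 g ξ‖ ≤ ∫ s, ‖g s‖ :=
    VectorFourier.norm_fourierIntegral_le_integral_norm _ _ _ g ξ
  have h₃ : (2 * π * |ξ|) ^ 3 * ‖𝓕 g ξ‖ ≤ ∫ s, ‖iteratedDeriv 3 g s‖ := by
    have hd := congrFun (Real.fourier_iteratedDeriv (N := 3) hg
      (fun k hk => hint k (by exact_mod_cast hk)) le_rfl) ξ
    have hn : ‖𝓕 (iteratedDeriv 3 g) ξ‖ ≤ ∫ s, ‖iteratedDeriv 3 g s‖ :=
      VectorFourier.norm_fourierIntegral_le_integral_norm _ _ _ _ ξ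
    rw [hd, norm_smul, norm_pow] at hn
    simpa [abs_of_pos Real.pi_pos, mul_assoc] using hn
  have hξ : |ξ| ^ 3 ≤ (2 * π * |ξ|) ^ 3 := by
    rw [mul_pow]
    have : (1 : ℝ) ≤ (2 * π) ^ 3 := one_le_pow₀ (by linarith [Real.pi_gt_three])
    nlinarith [pow_nonneg (abs_nonneg ξ) 3]
  have hcube : (1 + |ξ|) ^ 3 ≤ 4 * (1 + |ξ| ^ 3) := by
    nlinarith [sq_nonneg (|ξ| - 1), mul_nonneg (abs_nonneg ξ) (sq_nonneg (|ξ| - 1))]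
  rw [weight_neg_three, ← div_eq_mul_inv, le_div_iff₀ (by positivity)]
  nlinarith [norm_nonneg (𝓕 g ξ), mul_le_mul_of_nonneg_right hξ (norm_nonneg (𝓕 g ξ))]

end FourierDecay

section Support

variable {X F : Type*} [NormedAddCommGroup X] [NormedAddCommGroup F]

lemma norm_le_indicator_mul {R M : ℝ} {x : X} {u : F} (h0 : R < ‖x‖ → u = 0) (hM : ‖u‖ ≤ M) :
    ‖u‖ ≤ (closedBall (0 : X) R).indicator 1 x * M := by
  by_cases hx : x ∈ closedBall (0 : X) R
  · simpa [Set.indicator_of_mem hx] using hM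
  · rw [Set.indicator_of_notMem hx, zero_mul, h0 (by simpa using hx), norm_zero]

variable [MeasurableSpace X] [ProperSpace X] [OpensMeasurableSpace X]
  {μ : Measure X} [IsFiniteMeasureOnCompacts μ]

lemma integrable_indicator_closedBall (R : ℝ) :
    Integrable ((closedBall (0 : X) R).indicator (1 : X → ℝ)) μ :=
  (integrable_indicator_iff measurableSet_closedBall).2
    (integrableOn_const measure_closedBall_lt_top.ne)

lemma integral_norm_le_of_support_subset {g : X → F} {R M : ℝ}
    (hs : support g ⊆ closedBall 0 R) (hM : ∀ x, ‖g x‖ ≤ M) :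
    ∫ x, ‖g x‖ ∂μ ≤ μ.real (closedBall 0 R) * M := by
  have hbound : ∀ x, ‖g x‖ ≤ (closedBall (0 : X) R).indicator 1 x * M := fun x =>
    norm_le_indicator_mul (fun hx => notMem_support.1 fun h => by
      have := hs h; rw [mem_closedBall_zero_iff] at this; linarith) (hM x)
  calc ∫ x, ‖g x‖ ∂μ ≤ ∫ x, (closedBall (0 : X) R).indicator 1 x * M ∂μ :=
        integral_mono_of_nonneg (.of_forall fun _ => norm_nonneg _)
          ((integrable_indicator_closedBall R).mul_const M) (.of_forall hbound)
    _ = μ.real (closedBall 0 R) * M := by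
        rw [integral_mul_const, integral_indicator_one measurableSet_closedBall]

end Support

lemma support_iteratedDeriv_subset {F : Type*} [NormedAddCommGroup F] [NormedSpace ℝ F]
    {g : ℝ → F} {R : ℝ} (hs : support g ⊆ closedBall 0 R) (k : ℕ) :
    support (iteratedDeriv k g) ⊆ closedBall 0 R := by
  intro s hs'
  have hF : s ∈ support (iteratedFDeriv ℝ k g) := fun h => hs' <| by
    rw [iteratedDeriv_eq_iteratedFDeriv, h]; rfl
  exact (isClosed_closedBall.closure_subset_iff.2 hs) (support_iteratedFDeriv_subset k hF)

theorem norm_fourier_le_of_support_subset {E : Type*} [NormedAddCommGroup E] [NormedSpace ℂ E]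
    {g : ℝ → E} (hg : ContDiff ℝ (⊤ : ℕ∞) g) {R M₀ M₃ : ℝ}
    (hs : support g ⊆ closedBall 0 R) (h₀ : ∀ s, ‖g s‖ ≤ M₀)
    (h₃ : ∀ s, ‖iteratedDeriv 3 g s‖ ≤ M₃) (ξ : ℝ) :
    ‖𝓕 g ξ‖ ≤ 4 * (volume.real (closedBall (0 : ℝ) R) * (M₀ + M₃)) * weight (-3) ξ := by
  have hint : ∀ k : ℕ, k ≤ 3 → Integrable (iteratedDeriv k g) := fun k _ =>
    (hg.continuous_iteratedDeriv k (by exact_mod_cast le_top)).integrable_of_hasCompactSupport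
      (HasCompactSupport.intro (isCompact_closedBall 0 R) fun s hs' =>
        notMem_support.1 fun h => hs' (support_iteratedDeriv_subset hs k h))
  refine (norm_fourier_le_weight (hg.of_le (WithTop.coe_le_coe.2 le_top)) hint ξ).trans ?_
  have := integral_norm_le_of_support_subset (μ := volume) hs h₀
  have := integral_norm_le_of_support_subset (μ := volume) (support_iteratedDeriv_subset hs 3) h₃
  gcongr 4 * ?_ * _
  · exact weight_nonneg _ _
  · linarith

lemma integral_fourier_eq {E : Type*} [NormedAddCommGroup E] [NormedSpace ℂ E] [CompleteSpace E]
    {g : ℝ → E} (hg : Integrable g) (hFg : Integrable (𝓕 g))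
    (h0 : ContinuousAt g 0) : ∫ ξ, 𝓕 g ξ = g 0 := by
  rw [← hg.fourierInv_fourier_eq hFg h0, Real.fourierInv_eq]
  simp

section LineDerivatives

variable {W G : Type*} [NormedAddCommGroup W] [NormedSpace ℝ W] [NormedAddCommGroup G]
  [NormedSpace ℝ G] {F : W → G}

lemma iteratedDeriv_comp_add_smul (hF : ContDiff ℝ (⊤ : ℕ∞) F) (w v : W) (k : ℕ) (s : ℝ) :
    iteratedDeriv k (fun s : ℝ => F (w + s • v)) s
      = iteratedFDeriv ℝ k F (w + s • v) (fun _ => v) := by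
  have hcomp : (fun s : ℝ => F (w + s • v))
      = (fun z => F (z + w)) ∘ ContinuousLinearMap.smulRight (1 : ℝ →L[ℝ] ℝ) v := by
    funext s; simp [add_comm]
  have hFw : ContDiff ℝ (⊤ : ℕ∞) fun z => F (z + w) := hF.comp (contDiff_id.add contDiff_const)
  rw [iteratedDeriv_eq_iteratedFDeriv, hcomp,
    ContinuousLinearMap.iteratedFDeriv_comp_right _ hFw _ (by exact_mod_cast le_top),
    iteratedFDeriv_comp_add_right]
  simp [add_comm]

lemma norm_iteratedFDeriv_sub_le (hF : ContDiff ℝ (⊤ : ℕ∞) F) {k : ℕ} {M : ℝ}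
    (hM : ∀ w, ‖iteratedFDeriv ℝ (k + 1) F w‖ ≤ M) (w w' : W) :
    ‖iteratedFDeriv ℝ k F w - iteratedFDeriv ℝ k F w'‖ ≤ M * ‖w - w'‖ :=
  (convex_univ : Convex ℝ (Set.univ : Set W)).norm_image_sub_le_of_norm_fderiv_le
    (fun z _ => hF.differentiable_iteratedFDeriv (by exact_mod_cast WithTop.coe_lt_top _) z)
    (fun z _ => by rw [norm_fderiv_iteratedFDeriv]; exact hM z) (Set.mem_univ _) (Set.mem_univ _)

end LineDerivatives

abbrev AmplitudeDomain (n : ℕ) : Type :=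
  ℝ × (Fin (n+1) → ℝ) × (Fin (n+1) → ℝ) × (Fin (n+1) → ℝ)

end TraceAsymptotics

namespace IsAmplitude

open TraceAsymptotics

variable {n : ℕ} {m' : ℝ} {a : AmplitudeDomain n → ℝ → ℂ}

lemma continuous (ha : IsAmplitude n m' a) :
    Continuous fun q : AmplitudeDomain n × ℝ => a q.1 q.2 :=
  ha.1.continuous

lemma contDiff_apply (ha : IsAmplitude n m' a) (σ : ℝ) :
    ContDiff ℝ (⊤ : ℕ∞) fun w => a w σ :=
  ha.1.comp (contDiff_id.prodMk contDiff_const)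

lemma exists_radius (ha : IsAmplitude n m' a) : ∃ R : ℝ, ∀ w σ, R < ‖w‖ → a w σ = 0 := by
  obtain ⟨-, ⟨K, hK, hKa⟩, -⟩ := ha
  obtain ⟨R, hR⟩ := (isBounded_iff_subset_closedBall 0).1 hK.isBounded
  exact ⟨R, fun w σ hw => hKa w σ fun hwK => by
    have := hR hwK; rw [mem_closedBall_zero_iff] at this; linarith⟩

lemma exists_norm_iteratedFDeriv_le (ha : IsAmplitude n m' a) (k : ℕ) :
    ∃ C, 0 ≤ C ∧ ∀ w σ, ‖iteratedFDeriv ℝ k (fun w => a w σ) w‖ ≤ C * weight m' σ := by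
  obtain ⟨C, hC⟩ : ∃ C, ∀ w σ, ‖iteratedFDeriv ℝ k (fun w => a w σ) w‖ ≤ C * weight m' σ := by
    simpa [weight] using ha.2.2 k 0
  exact ⟨C, nonneg_of_mul_nonneg_left ((norm_nonneg _).trans (hC 0 0)) (weight_pos _ _), hC⟩

lemma exists_norm_le (ha : IsAmplitude n m' a) :
    ∃ C, 0 ≤ C ∧ ∀ w σ, ‖a w σ‖ ≤ C * weight m' σ := by
  simpa using ha.exists_norm_iteratedFDeriv_le 0

lemma exists_norm_iteratedFDeriv_sub_le (ha : IsAmplitude n m' a) (k : ℕ) :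
    ∃ C, 0 ≤ C ∧ ∀ w w' σ,
      ‖iteratedFDeriv ℝ k (fun w => a w σ) w - iteratedFDeriv ℝ k (fun w => a w σ) w'‖
        ≤ C * ‖w - w'‖ * weight m' σ := by
  obtain ⟨C, hC0, hC⟩ := ha.exists_norm_iteratedFDeriv_le (k + 1)
  refine ⟨C, hC0, fun w w' σ => ?_⟩
  exact (norm_iteratedFDeriv_sub_le (ha.contDiff_apply σ) (fun z => hC z σ) w w').trans_eq
    (by ring)

end IsAmplitude

namespace TraceAsymptotics

variable {n : ℕ} {m' R : ℝ} {a : AmplitudeDomain n → ℝ → ℂ}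

section Slices

lemma norm_s_le (s : ℝ) (x y p : Fin (n+1) → ℝ) : |s| ≤ ‖((s, x, y, p) : AmplitudeDomain n)‖ := by
  simp [Prod.norm_def]

lemma norm_x_le (s : ℝ) (x y p : Fin (n+1) → ℝ) : ‖x‖ ≤ ‖((s, x, y, p) : AmplitudeDomain n)‖ := by
  simp [Prod.norm_def]

lemma norm_p_le (s : ℝ) (x y p : Fin (n+1) → ℝ) : ‖p‖ ≤ ‖((s, x, y, p) : AmplitudeDomain n)‖ := by
  simp [Prod.norm_def]

def diagSlice (a : AmplitudeDomain n → ℝ → ℂ) (x p : Fin (n+1) → ℝ) (σ : ℝ) : ℝ → ℂ :=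
  fun s => a (s, x, x, p) σ

lemma diagSlice_eq_comp_line (x p : Fin (n+1) → ℝ) (σ : ℝ) :
    diagSlice a x p σ = fun s => a (((0, x, x, p) : AmplitudeDomain n) + s • (1, 0, 0, 0)) σ := by
  funext s; simp [diagSlice]

lemma contDiff_diagSlice (ha : IsAmplitude n m' a) (x p : Fin (n+1) → ℝ) (σ : ℝ) :
    ContDiff ℝ (⊤ : ℕ∞) (diagSlice a x p σ) :=
  (ha.contDiff_apply σ).comp (by fun_prop : ContDiff ℝ (⊤ : ℕ∞) fun s : ℝ =>
    ((s, x, x, p) : AmplitudeDomain n))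

lemma iteratedDeriv_diagSlice (ha : IsAmplitude n m' a) (x p : Fin (n+1) → ℝ) (σ : ℝ)
    (k : ℕ) (s : ℝ) :
    iteratedDeriv k (diagSlice a x p σ) s
      = iteratedFDeriv ℝ k (fun w => a w σ) (s, x, x, p) (fun _ => (1, 0, 0, 0)) := by
  rw [diagSlice_eq_comp_line, iteratedDeriv_comp_add_smul (ha.contDiff_apply σ)]
  simp

lemma norm_iteratedDeriv_diagSlice_le (ha : IsAmplitude n m' a) (x p : Fin (n+1) → ℝ)
    (σ : ℝ) (k : ℕ) (s : ℝ) :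
    ‖iteratedDeriv k (diagSlice a x p σ) s‖ ≤ ‖iteratedFDeriv ℝ k (fun w => a w σ) (s, x, x, p)‖ := by
  rw [iteratedDeriv_diagSlice ha]
  refine (ContinuousMultilinearMap.le_opNorm _ _).trans ?_
  simp [Prod.norm_def]

lemma norm_iteratedDeriv_diagSlice_sub_le (ha : IsAmplitude n m' a) (x p q : Fin (n+1) → ℝ)
    (σ : ℝ) (k : ℕ) (s : ℝ) :
    ‖iteratedDeriv k (diagSlice a x p σ - diagSlice a x q σ) s‖
      ≤ ‖iteratedFDeriv ℝ k (fun w => a w σ) (s, x, x, p)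
          - iteratedFDeriv ℝ k (fun w => a w σ) (s, x, x, q)‖ := by
  rw [iteratedDeriv_sub ((contDiff_diagSlice ha x p σ).contDiffAt.of_le (by exact_mod_cast le_top))
    ((contDiff_diagSlice ha x q σ).contDiffAt.of_le (by exact_mod_cast le_top)),
    iteratedDeriv_diagSlice ha, iteratedDeriv_diagSlice ha, ← sub_apply]
  refine (ContinuousMultilinearMap.le_opNorm _ _).trans ?_
  simp [Prod.norm_def]

lemma diagSlice_eq_zero (hR : ∀ w σ, R < ‖w‖ → a w σ = 0) {x p : Fin (n+1) → ℝ} (σ : ℝ)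
    (h : R < ‖x‖ ∨ R < ‖p‖) : diagSlice a x p σ = 0 := by
  funext s
  refine hR _ σ ?_
  rcases h with h | h
  · exact h.trans_le (norm_x_le s x x p)
  · exact h.trans_le (norm_p_le s x x p)

lemma support_diagSlice_subset (hR : ∀ w σ, R < ‖w‖ → a w σ = 0) (x p : Fin (n+1) → ℝ)
    (σ : ℝ) : support (diagSlice a x p σ) ⊆ closedBall 0 R := fun s hs => by
  by_contra h
  exact hs (hR _ σ ((by simpa using h : R < |s|).trans_le (norm_s_le s x x p)))

lemma integrable_diagSlice (ha : IsAmplitude n m' a) (hR : ∀ w σ, R < ‖w‖ → a w σ = 0)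
    (x p : Fin (n+1) → ℝ) (σ : ℝ) : Integrable (diagSlice a x p σ) :=
  (contDiff_diagSlice ha x p σ).continuous.integrable_of_hasCompactSupport
    (HasCompactSupport.intro (isCompact_closedBall 0 R) fun _ hs =>
      notMem_support.1 fun h => hs (support_diagSlice_subset hR x p σ h))

end Slices

section SliceFourier

lemma fourier_sub_apply {E : Type*} [NormedAddCommGroup E] [NormedSpace ℂ E] {g h : ℝ → E} (hg : Integrable g) (hh : Integrable h) (ξ : ℝ) :
    𝓕 (g - h) ξ = 𝓕 g ξ - 𝓕 h ξ := by
  simp only [Real.fourier_eq, Pi.sub_apply, smul_sub]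
  exact integral_sub ((Real.fourierIntegral_convergent_iff ξ).2 hg)
    ((Real.fourierIntegral_convergent_iff ξ).2 hh)

lemma continuous_fourier {E : Type*} [NormedAddCommGroup E] [NormedSpace ℂ E] {g : ℝ → E} (hg : Integrable g) : Continuous (𝓕 g) :=
  VectorFourier.fourierIntegral_continuous Real.continuous_fourierChar
    (by exact continuous_inner) hg

theorem exists_norm_fourier_diagSlice_le (ha : IsAmplitude n m' a)
    (hR : ∀ w σ, R < ‖w‖ → a w σ = 0) :
    ∃ C, 0 ≤ C ∧ ∀ x p σ ξ, ‖𝓕 (diagSlice a x p σ) ξ‖ ≤ C * weight m' σ * weight (-3) ξ := by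
  obtain ⟨C₀, hC₀0, hC₀⟩ := ha.exists_norm_iteratedFDeriv_le 0
  obtain ⟨C₃, hC₃0, hC₃⟩ := ha.exists_norm_iteratedFDeriv_le 3
  refine ⟨4 * volume.real (closedBall (0 : ℝ) R) * (C₀ + C₃), by positivity, fun x p σ ξ => ?_⟩
  refine (norm_fourier_le_of_support_subset (contDiff_diagSlice ha x p σ)
    (support_diagSlice_subset hR x p σ)
    (fun s => by simpa using (norm_iteratedDeriv_diagSlice_le ha x p σ 0 s).trans (hC₀ _ σ))
    (fun s => (norm_iteratedDeriv_diagSlice_le ha x p σ 3 s).trans (hC₃ _ σ)) ξ).trans_eq ?_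
  ring

theorem exists_norm_fourier_diagSlice_sub_le (ha : IsAmplitude n m' a)
    (hR : ∀ w σ, R < ‖w‖ → a w σ = 0) :
    ∃ C, 0 ≤ C ∧ ∀ x p q σ ξ, ‖𝓕 (diagSlice a x p σ) ξ - 𝓕 (diagSlice a x q σ) ξ‖
      ≤ C * ‖p - q‖ * weight m' σ * weight (-3) ξ := by
  obtain ⟨C₁, hC₁0, hC₁⟩ := ha.exists_norm_iteratedFDeriv_sub_le 0
  obtain ⟨C₄, hC₄0, hC₄⟩ := ha.exists_norm_iteratedFDeriv_sub_le 3
  refine ⟨4 * volume.real (closedBall (0 : ℝ) R) * (C₁ + C₄), by positivity,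
    fun x p q σ ξ => ?_⟩
  have hdist : ∀ s : ℝ, ‖((s, x, x, p) : AmplitudeDomain n) - (s, x, x, q)‖ = ‖p - q‖ := by
    intro s; simp [Prod.norm_def]
  rw [← fourier_sub_apply (integrable_diagSlice ha hR x p σ) (integrable_diagSlice ha hR x q σ)]
  refine (norm_fourier_le_of_support_subset
    ((contDiff_diagSlice ha x p σ).sub (contDiff_diagSlice ha x q σ) :
      ContDiff ℝ (⊤ : ℕ∞) (diagSlice a x p σ - diagSlice a x q σ))
    ((support_sub _ _).trans (Set.union_subset (support_diagSlice_subset hR x p σ)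
      (support_diagSlice_subset hR x q σ)))
    (fun s => by
      simpa [hdist] using (norm_iteratedDeriv_diagSlice_sub_le ha x p q σ 0 s).trans (hC₁ _ _ σ))
    (fun s => (norm_iteratedDeriv_diagSlice_sub_le ha x p q σ 3 s).trans
      ((hC₄ _ _ σ).trans_eq (by rw [hdist])))
    ξ).trans_eq ?_
  ring

lemma integral_fourier_diagSlice (ha : IsAmplitude n m' a) (hR : ∀ w σ, R < ‖w‖ → a w σ = 0)
    (x p : Fin (n+1) → ℝ) (σ c : ℝ) : ∫ u, 𝓕 (diagSlice a x p σ) (u - c) = a (0, x, x, p) σ := by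
  obtain ⟨C, -, hC⟩ := exists_norm_fourier_diagSlice_le ha hR
  have hg := integrable_diagSlice ha hR x p σ
  rw [integral_sub_right_eq_self (fun ξ => 𝓕 (diagSlice a x p σ) ξ) c]
  refine integral_fourier_eq hg ?_ (contDiff_diagSlice ha x p σ).continuous.continuousAt
  exact ((integrable_weight (by norm_num : (-3 : ℝ) < -1)).const_mul (C * weight m' σ)).mono'
    (continuous_fourier hg).aestronglyMeasurable (.of_forall (hC x p σ))

lemma stronglyMeasurable_fourier_diagSlice (ha : IsAmplitude n m' a) :
    StronglyMeasurable fun z : ((Fin (n+1) → ℝ) × (Fin (n+1) → ℝ) × ℝ) × ℝ =>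
      𝓕 (diagSlice a z.1.1 z.1.2.1 z.1.2.2) z.2 := by
  simp only [Real.fourier_real_eq]
  refine StronglyMeasurable.integral_prod_right'
    (f := fun q : (((Fin (n+1) → ℝ) × (Fin (n+1) → ℝ) × ℝ) × ℝ) × ℝ =>
      𝐞 (-(q.2 * q.1.2)) • a (q.2, q.1.1.1, q.1.1.1, q.1.1.2.1) q.1.1.2.2) ?_
  have hχ : Continuous fun q : (((Fin (n+1) → ℝ) × (Fin (n+1) → ℝ) × ℝ) × ℝ) × ℝ =>
      𝐞 (-(q.2 * q.1.2)) := Real.continuous_fourierChar.comp (by fun_prop)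
  exact (hχ.smul (ha.continuous.comp
    (f := fun q : (((Fin (n+1) → ℝ) × (Fin (n+1) → ℝ) × ℝ) × ℝ) × ℝ =>
      (((q.2, q.1.1.1, q.1.1.1, q.1.1.2.1) : AmplitudeDomain n), q.1.1.2.2))
    (by fun_prop))).stronglyMeasurable

lemma integrable_fourier_diagSlice_comp (ha : IsAmplitude n m' a)
    (hR : ∀ w σ, R < ‖w‖ → a w σ = 0) (x : Fin (n+1) → ℝ) {φ : ℝ → Fin (n+1) → ℝ}
    (hφ : Continuous φ) (σ c : ℝ) :
    Integrable fun u => 𝓕 (diagSlice a x (φ u) σ) (u - c) := by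
  obtain ⟨C, -, hC⟩ := exists_norm_fourier_diagSlice_le ha hR
  exact (((integrable_weight (by norm_num)).comp_sub_right c).const_mul (C * weight m' σ)).mono'
    ((stronglyMeasurable_fourier_diagSlice ha).comp_measurable
      (g := fun u : ℝ => ((x, φ u, σ), u - c)) (by fun_prop)).aestronglyMeasurable
    (.of_forall fun u => hC x _ σ (u - c))

end SliceFourier

section Reduction

/-- `∫ e^{i s (σ - p₁/ℏ)} a(s, x, x, p, σ) ds`, in Mathlib's normalization
`𝓕 g ξ = ∫ e^{-2π i s ξ} g(s) ds`. -/
def sIntegral (a : AmplitudeDomain n → ℝ → ℂ) (ℏ : ℝ) (x p : Fin (n+1) → ℝ) (σ : ℝ) : ℂ :=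
  𝓕 (diagSlice a x p σ) ((ℏ⁻¹ * p 0 - σ) / (2 * π))

def stIntegral (a : AmplitudeDomain n → ℝ → ℂ) (ℏ : ℝ) (x : Fin (n+1) → ℝ) (p' : Fin n → ℝ)
    (σ : ℝ) : ℂ :=
  ∫ t, sIntegral a ℏ x (Fin.cons t p') σ

lemma oscIntegrand_diag_zero (a : AmplitudeDomain n → ℝ → ℂ) (ℏ : ℝ) (x : Fin (n+1) → ℝ)
    (s : ℝ) (p : Fin (n+1) → ℝ) (σ : ℝ) :
    oscIntegrand n a ℏ x x 0 (s, p, σ)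
      = 𝐞 (-(s * ((ℏ⁻¹ * p 0 - σ) / (2 * π)))) • a (s, x, x, p) σ := by
  simp only [oscIntegrand, sub_self, zero_mul, Finset.sum_const_zero, mul_zero, zero_add,
    pow_zero, mul_one, Function.iterate_zero, id_eq, Circle.smul_def, Real.fourierChar_apply]
  rw [← mul_assoc, ← Complex.exp_add]
  congr 2
  push_cast
  field_simp
  ring

lemma integral_oscIntegrand_diag_zero (a : AmplitudeDomain n → ℝ → ℂ) (ℏ : ℝ)
    (x p : Fin (n+1) → ℝ) (σ : ℝ) :
    ∫ s, oscIntegrand n a ℏ x x 0 (s, p, σ) = sIntegral a ℏ x p σ := by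
  simp only [oscIntegrand_diag_zero, sIntegral, Real.fourier_real_eq]
  rfl

lemma sIntegral_eq_zero (hR : ∀ w σ, R < ‖w‖ → a w σ = 0) (ℏ : ℝ) {x p : Fin (n+1) → ℝ}
    (σ : ℝ) (h : R < ‖x‖ ∨ R < ‖p‖) : sIntegral a ℏ x p σ = 0 := by
  simp [sIntegral, diagSlice_eq_zero hR σ h, Real.fourier_eq]

lemma exists_norm_sIntegral_le (ha : IsAmplitude n m' a) (hR : ∀ w σ, R < ‖w‖ → a w σ = 0) :
    ∃ C, 0 ≤ C ∧ ∀ ℏ x p σ, ‖sIntegral a ℏ x p σ‖ ≤ C * weight m' σ := by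
  obtain ⟨C, hC0, hC⟩ := exists_norm_fourier_diagSlice_le ha hR
  refine ⟨C, hC0, fun ℏ x p σ => (hC x p σ _).trans ?_⟩
  have := weight_nonneg m' σ
  exact mul_le_of_le_one_right (by positivity) (weight_le_one (by norm_num) _)

lemma stronglyMeasurable_sIntegral (ha : IsAmplitude n m' a) (ℏ : ℝ) :
    StronglyMeasurable fun z : (Fin (n+1) → ℝ) × (Fin (n+1) → ℝ) × ℝ =>
      sIntegral a ℏ z.1 z.2.1 z.2.2 :=
  (stronglyMeasurable_fourier_diagSlice ha).comp_measurable
    (g := fun z : (Fin (n+1) → ℝ) × (Fin (n+1) → ℝ) × ℝ =>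
      (z, (ℏ⁻¹ * z.2.1 0 - z.2.2) / (2 * π))) (by fun_prop)

end Reduction

section CoreEstimate

lemma abs_le_norm_cons (t : ℝ) (p' : Fin n → ℝ) : |t| ≤ ‖(Fin.cons t p' : Fin (n+1) → ℝ)‖ := by
  simpa using norm_le_pi_norm (Fin.cons t p' : Fin (n+1) → ℝ) 0

lemma norm_le_norm_cons (t : ℝ) (p' : Fin n → ℝ) : ‖p'‖ ≤ ‖(Fin.cons t p' : Fin (n+1) → ℝ)‖ :=
  (pi_norm_le_iff_of_nonneg (norm_nonneg _)).2 fun j => by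
    simpa using norm_le_pi_norm (Fin.cons t p' : Fin (n+1) → ℝ) j.succ

lemma norm_cons_sub_cons (t : ℝ) (p' : Fin n → ℝ) :
    ‖(Fin.cons t p' : Fin (n+1) → ℝ) - Fin.cons 0 p'‖ ≤ |t| :=
  (pi_norm_le_iff_of_nonneg (abs_nonneg _)).2 fun i => by
    refine Fin.cases ?_ (fun j => ?_) i <;> simp

/-- The substitution `p₁ = 2πℏu` turns the `p₁`-integral into a Fourier inversion. -/
lemma stIntegral_eq_smul_integral {ℏ : ℝ} (hℏ : 0 < ℏ) (x : Fin (n+1) → ℝ) (p' : Fin n → ℝ)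
    (σ : ℝ) :
    stIntegral a ℏ x p' σ = (2 * π * ℏ) •
      ∫ u, 𝓕 (diagSlice a x (Fin.cons (2 * π * ℏ * u) p') σ) (u - σ / (2 * π)) := by
  have hc : 0 < 2 * π * ℏ := by positivity
  have h := Measure.integral_comp_mul_left (fun t => sIntegral a ℏ x (Fin.cons t p') σ) (2 * π * ℏ)
  rw [abs_of_pos (inv_pos.2 hc)] at h
  have hsubst : (∫ u, 𝓕 (diagSlice a x (Fin.cons (2 * π * ℏ * u) p') σ) (u - σ / (2 * π)))
      = ∫ u, sIntegral a ℏ x (Fin.cons (2 * π * ℏ * u) p') σ := by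
    congr 1
    funext u
    simp only [sIntegral, Fin.cons_zero]
    field_simp
  rw [stIntegral, hsubst, h, smul_inv_smul₀ hc.ne']

theorem exists_norm_stIntegral_sub_le (ha : IsAmplitude n m' a)
    (hR : ∀ w σ, R < ‖w‖ → a w σ = 0) :
    ∃ C, 0 ≤ C ∧ ∀ ℏ, 0 < ℏ → ∀ x p' σ,
      ‖stIntegral a ℏ x p' σ - (2 * π * ℏ) • a (0, x, x, Fin.cons 0 p') σ‖
        ≤ C * ℏ ^ 2 * weight (m' + 1) σ := by
  obtain ⟨Cs, hCs0, hCs⟩ := exists_norm_fourier_diagSlice_sub_le ha hR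
  obtain ⟨K, hK0, hK⟩ := exists_integral_abs_mul_weight_le
  refine ⟨(2 * π) ^ 2 * Cs * K, by positivity, fun ℏ hℏ x p' σ => ?_⟩
  have hc : 0 < 2 * π * ℏ := by positivity
  set c := σ / (2 * π)
  set G : ℝ → ℂ := fun u => 𝓕 (diagSlice a x (Fin.cons (2 * π * ℏ * u) p') σ) (u - c)
  set M : ℝ → ℂ := fun u => 𝓕 (diagSlice a x (Fin.cons 0 p') σ) (u - c)
  set A := 2 * π * ℏ * Cs * weight m' σ
  have hA : 0 ≤ A := by have := weight_nonneg m' σ; positivity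
  have hGint : Integrable G := integrable_fourier_diagSlice_comp ha hR x (by fun_prop) σ c
  have hMint : Integrable M := integrable_fourier_diagSlice_comp ha hR x continuous_const σ c
  have hM : ∫ u, M u = a (0, x, x, Fin.cons 0 p') σ := integral_fourier_diagSlice ha hR x _ σ c
  have hGM : ∀ u, ‖G u - M u‖ ≤ A * (|u| * weight (-3) (u - c)) := fun u => by
    refine (hCs x _ _ σ (u - c)).trans ?_
    have := norm_cons_sub_cons (2 * π * ℏ * u) p'
    rw [abs_mul, abs_of_pos hc] at this
    have := weight_nonneg m' σ
    have := weight_nonneg (-3) (u - c)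
    calc _ ≤ Cs * (2 * π * ℏ * |u|) * weight m' σ * weight (-3) (u - c) := by gcongr
      _ = _ := by ring
  have hcσ : |c| ≤ |σ| := by
    rw [abs_div, abs_of_pos (by positivity : (0 : ℝ) < 2 * π)]
    exact div_le_self (abs_nonneg σ) (by linarith [Real.pi_gt_three])
  rw [stIntegral_eq_smul_integral hℏ, ← hM, ← smul_sub, ← integral_sub hGint hMint, norm_smul,
    Real.norm_of_nonneg hc.le, ← weight_mul_one_add_abs]
  calc 2 * π * ℏ * ‖∫ u, (G u - M u)‖
      ≤ 2 * π * ℏ * ∫ u, A * (|u| * weight (-3) (u - c)) := by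
        gcongr
        exact norm_integral_le_of_norm_le ((integrable_abs_mul_weight c).const_mul A)
          (.of_forall hGM)
    _ ≤ 2 * π * ℏ * (A * (K * (1 + |σ|))) := by
        rw [integral_const_mul]
        gcongr
        exact (hK c).trans (by gcongr)
    _ = _ := by ring

end CoreEstimate

section Integrability

lemma integrable_oscIntegrand_diag (ha : IsAmplitude n m' a)
    (hR : ∀ w σ, R < ‖w‖ → a w σ = 0) (hm : m' < -1) (ℏ : ℝ) (x : Fin (n+1) → ℝ) :
    Integrable (oscIntegrand n a ℏ x x 0) := by
  obtain ⟨C, -, hC⟩ := ha.exists_norm_le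
  have heq : oscIntegrand n a ℏ x x 0 = fun q : ℝ × (Fin (n+1) → ℝ) × ℝ =>
      𝐞 (-(q.1 * ((ℏ⁻¹ * q.2.1 0 - q.2.2) / (2 * π)))) • a (q.1, x, x, q.2.1) q.2.2 := by
    funext q; exact oscIntegrand_diag_zero a ℏ x q.1 q.2.1 q.2.2
  have hχ : Continuous fun q : ℝ × (Fin (n+1) → ℝ) × ℝ =>
      𝐞 (-(q.1 * ((ℏ⁻¹ * q.2.1 0 - q.2.2) / (2 * π)))) :=
    Real.continuous_fourierChar.comp (by fun_prop)
  rw [heq]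
  refine ((integrable_indicator_closedBall R).mul_prod ((integrable_indicator_closedBall R).mul_prod
    ((integrable_weight hm).const_mul C))).mono'
    (hχ.smul (ha.continuous.comp (f := fun q : ℝ × (Fin (n+1) → ℝ) × ℝ =>
      (((q.1, x, x, q.2.1) : AmplitudeDomain n), q.2.2)) (by fun_prop))).aestronglyMeasurable
    (.of_forall fun ⟨s, p, σ⟩ => ?_)
  rw [Circle.norm_smul]
  exact norm_le_indicator_mul (fun hs => hR _ σ (hs.trans_le (norm_s_le s x x p)))
    (norm_le_indicator_mul (fun hp => hR _ σ (hp.trans_le (norm_p_le s x x p))) (hC _ σ))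

lemma integrable_sIntegral_cons (ha : IsAmplitude n m' a)
    (hR : ∀ w σ, R < ‖w‖ → a w σ = 0) (hm : m' < -1) (ℏ : ℝ) (x : Fin (n+1) → ℝ) :
    Integrable fun q : ℝ × (Fin n → ℝ) × ℝ => sIntegral a ℏ x (Fin.cons q.1 q.2.1) q.2.2 := by
  obtain ⟨C, -, hC⟩ := exists_norm_sIntegral_le ha hR
  refine ((integrable_indicator_closedBall R).mul_prod ((integrable_indicator_closedBall R).mul_prod
    ((integrable_weight hm).const_mul C))).mono'
    ((stronglyMeasurable_sIntegral ha ℏ).comp_measurable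
      (g := fun q : ℝ × (Fin n → ℝ) × ℝ => (x, (Fin.cons q.1 q.2.1 : Fin (n+1) → ℝ), q.2.2))
      (by fun_prop)).aestronglyMeasurable
    (.of_forall fun ⟨t, p', σ⟩ => ?_)
  exact norm_le_indicator_mul
    (fun ht => sIntegral_eq_zero hR ℏ σ (.inr (ht.trans_le (abs_le_norm_cons t p'))))
    (norm_le_indicator_mul
      (fun hp => sIntegral_eq_zero hR ℏ σ (.inr (hp.trans_le (norm_le_norm_cons t p'))))
      (hC ℏ x _ σ))

lemma stIntegral_eq_zero (hR : ∀ w σ, R < ‖w‖ → a w σ = 0) (ℏ : ℝ) {x : Fin (n+1) → ℝ}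
    {p' : Fin n → ℝ} (σ : ℝ) (h : R < ‖x‖ ∨ R < ‖p'‖) : stIntegral a ℏ x p' σ = 0 := by
  have h' : ∀ t, R < ‖x‖ ∨ R < ‖(Fin.cons t p' : Fin (n+1) → ℝ)‖ := fun t =>
    h.imp_right fun hp => hp.trans_le (norm_le_norm_cons t p')
  simp [stIntegral, sIntegral_eq_zero hR ℏ σ (h' _)]

lemma exists_norm_stIntegral_le (ha : IsAmplitude n m' a) (hR : ∀ w σ, R < ‖w‖ → a w σ = 0) :
    ∃ C, ∀ ℏ x p' σ, ‖stIntegral a ℏ x p' σ‖ ≤ C * weight m' σ := by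
  obtain ⟨C, -, hC⟩ := exists_norm_sIntegral_le ha hR
  refine ⟨volume.real (closedBall (0 : ℝ) R) * C, fun ℏ x p' σ => ?_⟩
  rw [stIntegral]
  refine (norm_integral_le_of_norm_le
    (g := fun t => (closedBall (0 : ℝ) R).indicator 1 t * (C * weight m' σ))
    ((integrable_indicator_closedBall R).mul_const _)
    (.of_forall fun t => norm_le_indicator_mul
      (fun ht => sIntegral_eq_zero hR ℏ σ (.inr (ht.trans_le (abs_le_norm_cons t p'))))
      (hC ℏ x _ σ))).trans_eq ?_
  rw [integral_mul_const, integral_indicator_one measurableSet_closedBall, mul_assoc]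

lemma integrable_stIntegral (ha : IsAmplitude n m' a) (hR : ∀ w σ, R < ‖w‖ → a w σ = 0)
    (hm : m' < -1) (ℏ : ℝ) :
    Integrable fun z : (Fin (n+1) → ℝ) × (Fin n → ℝ) × ℝ => stIntegral a ℏ z.1 z.2.1 z.2.2 := by
  obtain ⟨C, hC⟩ := exists_norm_stIntegral_le ha hR
  have hmeas : StronglyMeasurable fun z : (Fin (n+1) → ℝ) × (Fin n → ℝ) × ℝ =>
      ∫ t, sIntegral a ℏ z.1 (Fin.cons t z.2.1) z.2.2 :=
    StronglyMeasurable.integral_prod_right'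
      (f := fun q : ((Fin (n+1) → ℝ) × (Fin n → ℝ) × ℝ) × ℝ =>
        sIntegral a ℏ q.1.1 (Fin.cons q.2 q.1.2.1) q.1.2.2)
      ((stronglyMeasurable_sIntegral ha ℏ).comp_measurable
        (g := fun q : ((Fin (n+1) → ℝ) × (Fin n → ℝ) × ℝ) × ℝ =>
          (q.1.1, (Fin.cons q.2 q.1.2.1 : Fin (n+1) → ℝ), q.1.2.2)) (by fun_prop))
  refine ((integrable_indicator_closedBall R).mul_prod ((integrable_indicator_closedBall R).mul_prod
    ((integrable_weight hm).const_mul C))).mono' hmeas.aestronglyMeasurable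
    (.of_forall fun ⟨x, p', σ⟩ => ?_)
  exact norm_le_indicator_mul (fun hx => stIntegral_eq_zero hR ℏ σ (.inl hx))
    (norm_le_indicator_mul (fun hp => stIntegral_eq_zero hR ℏ σ (.inr hp)) (hC ℏ x p' σ))

lemma integrable_amplitude_cons_zero (ha : IsAmplitude n m' a)
    (hR : ∀ w σ, R < ‖w‖ → a w σ = 0) (hm : m' < -1) :
    Integrable fun z : (Fin (n+1) → ℝ) × (Fin n → ℝ) × ℝ =>
      a (0, z.1, z.1, Fin.cons 0 z.2.1) z.2.2 := by
  obtain ⟨C, -, hC⟩ := ha.exists_norm_le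
  refine ((integrable_indicator_closedBall R).mul_prod ((integrable_indicator_closedBall R).mul_prod
    ((integrable_weight hm).const_mul C))).mono'
    (ha.continuous.comp (f := fun z : (Fin (n+1) → ℝ) × (Fin n → ℝ) × ℝ =>
      (((0, z.1, z.1, Fin.cons 0 z.2.1) : AmplitudeDomain n), z.2.2))
      (by fun_prop)).aestronglyMeasurable
    (.of_forall fun ⟨x, p', σ⟩ => ?_)
  exact norm_le_indicator_mul (fun hx => hR _ σ (hx.trans_le (norm_x_le _ x x _)))
    (norm_le_indicator_mul
      (fun hp => hR _ σ ((hp.trans_le (norm_le_norm_cons 0 p')).trans_le (norm_p_le _ x x _)))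
      (hC _ σ))

end Integrability

section Fubini

lemma integral_oscIntegrand_diag_eq (ha : IsAmplitude n m' a)
    (hR : ∀ w σ, R < ‖w‖ → a w σ = 0) (hm : m' < -1) (ℏ : ℝ) (x : Fin (n+1) → ℝ) :
    ∫ q, oscIntegrand n a ℏ x x 0 q = ∫ y : (Fin n → ℝ) × ℝ, stIntegral a ℏ x y.1 y.2 := by
  let e : ℝ × (Fin n → ℝ) × ℝ ≃ᵐ (Fin (n+1) → ℝ) × ℝ :=
    MeasurableEquiv.prodAssoc.symm.trans
      ((MeasurableEquiv.piFinSuccAbove (fun _ => ℝ) 0).symm.prodCongr (MeasurableEquiv.refl ℝ))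
  have he : MeasurePreserving e :=
    (measurePreserving_prodAssoc volume volume volume).symm.trans
      (((volume_preserving_piFinSuccAbove (fun _ => ℝ) 0).symm _).prod (.id volume))
  calc ∫ q, oscIntegrand n a ℏ x x 0 q
      = ∫ y : (Fin (n+1) → ℝ) × ℝ, sIntegral a ℏ x y.1 y.2 := by
        rw [Measure.volume_eq_prod,
          integral_prod_symm _ (integrable_oscIntegrand_diag ha hR hm ℏ x)]
        simp only [integral_oscIntegrand_diag_zero]
    _ = ∫ q : ℝ × (Fin n → ℝ) × ℝ, sIntegral a ℏ x (Fin.cons q.1 q.2.1) q.2.2 := by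
        rw [← he.integral_comp']
        congr 1
        funext q
        simp [e, MeasurableEquiv.prodCongr, MeasurableEquiv.piFinSuccAbove_symm_apply]
        rfl
    _ = ∫ y : (Fin n → ℝ) × ℝ, stIntegral a ℏ x y.1 y.2 := by
        rw [Measure.volume_eq_prod, integral_prod_symm _ (integrable_sIntegral_cons ha hR hm ℏ x)]
        rfl

lemma integral_aTwo_eq (ha : IsAmplitude n m' a) (hR : ∀ w σ, R < ‖w‖ → a w σ = 0)
    (hm : m' < -1) :
    ∫ q : (Fin (n+1) → ℝ) × (Fin n → ℝ), aTwo n a (0, q.1, q.1, Fin.cons 0 q.2)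
      = ∫ z : (Fin (n+1) → ℝ) × (Fin n → ℝ) × ℝ, a (0, z.1, z.1, Fin.cons 0 z.2.1) z.2.2 := by
  have hassoc := measurePreserving_prodAssoc (volume : Measure (Fin (n+1) → ℝ))
    (volume : Measure (Fin n → ℝ)) (volume : Measure ℝ)
  have hint := hassoc.integrable_comp_of_integrable (integrable_amplitude_cons_zero ha hR hm)
  simp only [aTwo, zero_mul, Complex.ofReal_zero, mul_zero, Complex.exp_zero, one_mul]
  exact (integral_prod _ hint).symm.trans (hassoc.integral_comp'
    (fun z : (Fin (n+1) → ℝ) × (Fin n → ℝ) × ℝ => a (0, z.1, z.1, Fin.cons 0 z.2.1) z.2.2))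

end Fubini

section Assembly

lemma integrable_exp_mul_apply (ha : IsAmplitude n m' a) (hm : m' < -1) (w : AmplitudeDomain n) :
    Integrable fun σ : ℝ => Complex.exp (Complex.I * Complex.ofReal (w.1 * σ)) * a w σ := by
  obtain ⟨C, -, hC⟩ := ha.exists_norm_le
  refine ((integrable_weight hm).const_mul C).mono'
    ((by fun_prop : Continuous fun σ : ℝ => Complex.exp (Complex.I * Complex.ofReal (w.1 * σ))).mul
      (ha.continuous.comp (f := fun σ : ℝ => (w, σ)) (by fun_prop))).aestronglyMeasurable
    (.of_forall fun σ => ?_)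
  rw [norm_mul, mul_comm Complex.I, Complex.norm_exp_ofReal_mul_I, one_mul]
  exact hC w σ

lemma integral_uh_diag_eq (ha : IsAmplitude n m' a) (hR : ∀ w σ, R < ‖w‖ → a w σ = 0)
    (hm : m' ≤ -2) (ℏ : ℝ) :
    ∫ x, uh n m' a ℏ x x = (((2 * π * ℏ) ^ (-((n : ℤ) + 1)) : ℝ) : ℂ) *
      ∫ z : (Fin (n+1) → ℝ) × (Fin n → ℝ) × ℝ, stIntegral a ℏ z.1 z.2.1 z.2.2 := by
  have hK : ⌈m' / 2 + 1⌉₊ = 0 := Nat.ceil_eq_zero.2 (by linarith)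
  have hm' : m' < -1 := by linarith
  simp only [uh, hK, integral_oscIntegrand_diag_eq ha hR hm' ℏ]
  rw [integral_const_mul]
  congr 1
  exact (integral_prod _ (integrable_stIntegral ha hR hm' ℏ)).symm

theorem exists_norm_integral_stIntegral_sub_le (ha : IsAmplitude n m' a)
    (hR : ∀ w σ, R < ‖w‖ → a w σ = 0) (hm : m' < -2) :
    ∃ C, ∀ ℏ, 0 < ℏ →
      ‖(∫ z : (Fin (n+1) → ℝ) × (Fin n → ℝ) × ℝ, stIntegral a ℏ z.1 z.2.1 z.2.2)
        - (2 * π * ℏ) • ∫ z : (Fin (n+1) → ℝ) × (Fin n → ℝ) × ℝ,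
            a (0, z.1, z.1, Fin.cons 0 z.2.1) z.2.2‖ ≤ C * ℏ ^ 2 := by
  obtain ⟨C, -, hC⟩ := exists_norm_stIntegral_sub_le ha hR
  set M : (Fin (n+1) → ℝ) × (Fin n → ℝ) × ℝ → ℝ := fun z =>
    (closedBall 0 R).indicator 1 z.1 * ((closedBall 0 R).indicator 1 z.2.1 *
      (C * weight (m' + 1) z.2.2))
  have hM : Integrable M := (integrable_indicator_closedBall R).mul_prod
    ((integrable_indicator_closedBall R).mul_prod
      ((integrable_weight (by linarith)).const_mul C))
  refine ⟨∫ z, M z, fun ℏ hℏ => ?_⟩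
  have hpt : ∀ z : (Fin (n+1) → ℝ) × (Fin n → ℝ) × ℝ,
      ‖stIntegral a ℏ z.1 z.2.1 z.2.2 - (2 * π * ℏ) • a (0, z.1, z.1, Fin.cons 0 z.2.1) z.2.2‖
        ≤ ℏ ^ 2 * M z := fun ⟨x, p', σ⟩ => by
    have hvanish : R < ‖x‖ ∨ R < ‖p'‖ →
        stIntegral a ℏ x p' σ - (2 * π * ℏ) • a (0, x, x, Fin.cons 0 p') σ = 0 := fun h => by
      have ha0 : a (0, x, x, Fin.cons 0 p') σ = 0 := hR _ σ (by
        rcases h with h | h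
        · exact h.trans_le (norm_x_le _ x x _)
        · exact (h.trans_le (norm_le_norm_cons 0 p')).trans_le (norm_p_le _ x x _))
      rw [stIntegral_eq_zero hR ℏ σ h, ha0, smul_zero, sub_zero]
    refine (norm_le_indicator_mul (fun hx => hvanish (.inl hx))
      (norm_le_indicator_mul (fun hp => hvanish (.inr hp)) (hC ℏ hℏ x p' σ))).trans_eq ?_
    simp only [M]
    ring
  have hA : Integrable fun z : (Fin (n+1) → ℝ) × (Fin n → ℝ) × ℝ =>
      (2 * π * ℏ) • a (0, z.1, z.1, Fin.cons 0 z.2.1) z.2.2 :=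
    (integrable_amplitude_cons_zero ha hR (by linarith)).smul (2 * π * ℏ : ℝ)
  rw [← integral_smul, ← integral_sub (integrable_stIntegral ha hR (by linarith) ℏ) hA]
  refine (norm_integral_le_of_norm_le (hM.const_mul _) (.of_forall hpt)).trans_eq ?_
  rw [integral_const_mul, mul_comm]

lemma rpow_one_sub_mul_rpow_one_sub {c ℏ : ℝ} (hc : 0 < c) (hℏ : 0 < ℏ) (n : ℕ) :
    c ^ (1 - ((n : ℝ) + 1)) * ℏ ^ (1 - ((n : ℝ) + 1)) = (c * ℏ) ^ (-((n : ℤ) + 1)) * (c * ℏ) := by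
  rw [← Real.mul_rpow hc.le hℏ.le, show (1 - ((n : ℝ) + 1)) = ((-(n : ℤ) : ℤ) : ℝ) by push_cast; ring,
    Real.rpow_intCast, ← zpow_add_one₀ (mul_pos hc hℏ).ne']
  ring_nf

lemma zpow_mul_sq_eq {c ℏ : ℝ} (hℏ : 0 < ℏ) (n : ℕ) :
    (c * ℏ) ^ (-((n : ℤ) + 1)) * ℏ ^ 2 = c ^ (-((n : ℤ) + 1)) * ℏ ^ (2 - ((n : ℝ) + 1)) := by
  rw [show (2 - ((n : ℝ) + 1)) = ((-((n : ℤ) + 1) + 2 : ℤ) : ℝ) by push_cast; ring,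
    Real.rpow_intCast, zpow_add₀ hℏ.ne', mul_zpow]
  norm_cast
  ring

end Assembly

end TraceAsymptotics

open TraceAsymptotics

/-- trace asymptotics, `m' ≤ -4`: the integral defining `a₂` is
absolutely convergent, and as `ℏ → 0⁺`,
`∫ u_ℏ(x,x) dx = (2π)^{1-(n+1)} ℏ^{1-(n+1)} ∫ a₂(0,x,x,(0,p')) dx dp' + O(ℏ^{2-(n+1)})`. -/
theorem statement7 (n : ℕ) (m' : ℝ)
    (a : (ℝ × (Fin (n+1) → ℝ) × (Fin (n+1) → ℝ) × (Fin (n+1) → ℝ)) → ℝ → ℂ)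
    (ha : IsAmplitude n m' a) (hm : m' ≤ -4) :
    (∀ w, Integrable (fun σ : ℝ => Complex.exp (Complex.I * Complex.ofReal (w.1 * σ)) * a w σ)) ∧
    ∃ C > (0 : ℝ), ∃ ℏ₀ > (0 : ℝ), ∀ ℏ : ℝ, 0 < ℏ → ℏ ≤ ℏ₀ →
      ‖(∫ x : Fin (n+1) → ℝ, uh n m' a ℏ x x) -
          Complex.ofReal ((2 * π) ^ (1 - ((n : ℝ) + 1)) * ℏ ^ (1 - ((n : ℝ) + 1))) *
            ∫ q : (Fin (n+1) → ℝ) × (Fin n → ℝ),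
              aTwo n a (0, q.1, q.1, Fin.cons 0 q.2)‖
        ≤ C * ℏ ^ (2 - ((n : ℝ) + 1)) := by
  obtain ⟨R, hR⟩ := ha.exists_radius
  obtain ⟨C, hC⟩ := exists_norm_integral_stIntegral_sub_le ha hR (by linarith)
  have h2π : 0 < 2 * π := by positivity
  refine ⟨fun w => integrable_exp_mul_apply ha (by linarith) w,
    (|C| + 1) * (2 * π) ^ (-((n : ℤ) + 1)), by positivity, 1, one_pos, fun ℏ hℏ _ => ?_⟩
  have hc : 0 < (2 * π * ℏ) ^ (-((n : ℤ) + 1)) := by positivity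
  have hfactor : ∀ (A B : ℂ) (c κ : ℝ), (c : ℂ) * A - ((c * κ : ℝ) : ℂ) * B
      = (c : ℂ) * (A - κ • B) := fun A B c κ => by
    rw [Complex.real_smul, Complex.ofReal_mul]; ring
  rw [integral_uh_diag_eq ha hR (by linarith), integral_aTwo_eq ha hR (by linarith),
    rpow_one_sub_mul_rpow_one_sub h2π hℏ, hfactor, norm_mul, Complex.norm_real,
    Real.norm_of_nonneg hc.le]
  calc (2 * π * ℏ) ^ (-((n : ℤ) + 1)) * ‖_‖
      ≤ (2 * π * ℏ) ^ (-((n : ℤ) + 1)) * ((|C| + 1) * ℏ ^ 2) := by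
        gcongr
        exact (hC ℏ hℏ).trans (by gcongr; linarith [le_abs_self C])
    _ = (|C| + 1) * (2 * π) ^ (-((n : ℤ) + 1)) * ℏ ^ (2 - ((n : ℝ) + 1)) := by
        rw [mul_left_comm, zpow_mul_sq_eq hℏ, mul_assoc]
end
end

section
/- Fix integers d ≥ 0 and k ≥ 1. Let G : ℝ^d × ℝ × ℝ → ℝ, written G(v,θ,τ), be smooth and 2π-periodic in θ, i.e. G(v,θ+2π,τ) = G(v,θ,τ) for all (v,θ,τ). Define G̃ : ℝ^d × ℂ → ℝ by G̃(v,z) = |z|^{2k} · G(v, arg z, |z|²) for z ≠ 0 and G̃(v,0) = 0 (by the 2π-periodicity of G in θ this value is independent of the choice of branch of the argument arg z). Then G̃ is of class C^k on ℝ^d × ℂ (identifying ℂ with ℝ²). -/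
/-!
Write `polarLift M H (v, z) = |z|^M H(v, arg z, |z|)`. In the coordinates `z = e^ζ`,
periodicity of `H` turns it into the smooth function `e^{M Re ζ} H(v, Im ζ, e^{Re ζ})`, and every
`z ≠ 0` has a neighbourhood carrying a branch of the logarithm, so `polarLift (N + 1) H` is
differentiable off `z = 0` with derivative `polarLift N K`, where `K = polarDeriv (N + 1) H` is
again smooth and `2π`-periodic in `θ`. Near `z = 0` the function is `O(|z|^M)`, hence
differentiable with derivative `0` once `M ≥ 2`. By induction `polarLift (m + 1) H` is `C^m`, and
`G̃ = polarLift (2k) H` for `H(v, θ, r) = G(v, θ, r²)`, which is `C^{2k-1}` and so `C^k`.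
-/

open Real

noncomputable section

@[fun_prop]
theorem ContDiff.clm_prod {𝕜 X F G W : Type*} [NontriviallyNormedField 𝕜]
    [NormedAddCommGroup X] [NormedSpace 𝕜 X] [NormedAddCommGroup F] [NormedSpace 𝕜 F]
    [NormedAddCommGroup G] [NormedSpace 𝕜 G] [NormedAddCommGroup W] [NormedSpace 𝕜 W]
    {n : WithTop ℕ∞} {f : X → W →L[𝕜] F} {g : X → W →L[𝕜] G}
    (hf : ContDiff 𝕜 n f) (hg : ContDiff 𝕜 n g) : ContDiff 𝕜 n fun x => (f x).prod (g x) :=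
  (ContinuousLinearMap.prodₗᵢ 𝕜 : (W →L[𝕜] F) × (W →L[𝕜] G) ≃ₗᵢ[𝕜] W →L[𝕜] F × G).contDiff.comp
    (hf.prodMk hg)

namespace PolarLift

open Complex Filter Topology ContinuousLinearMap
open scoped ContDiff

theorem exists_eventually_norm_le {X F : Type*} [TopologicalSpace X] [SeminormedAddCommGroup F]
    {f : X × ℝ × ℝ → F} (hf : Continuous f) (x₀ : X) :
    ∃ C, ∀ᶠ w in 𝓝 (x₀, (0 : ℂ)), ‖f (w.1, arg w.2, ‖w.2‖)‖ ≤ C := by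
  obtain ⟨C, hC⟩ := (isCompact_Icc (a := -π) (b := π)).exists_bound_of_continuousOn
    (f := fun θ => f (x₀, θ, 0)) (by fun_prop)
  have hK : ∀ᶠ x : X × ℝ in 𝓝 (x₀, 0), ∀ θ ∈ Set.Icc (-π) π, ‖f (x.1, θ, x.2)‖ < C + 1 := by
    refine isCompact_Icc.eventually_forall_of_forall_eventually fun θ hθ => ?_
    have hcont : Continuous fun y : (X × ℝ) × ℝ => ‖f (y.1.1, y.2, y.1.2)‖ := by fun_prop
    exact hcont.continuousAt.eventually_lt continuousAt_const ((hC θ hθ).trans_lt (lt_add_one C))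
  have hpolar : Tendsto (fun w : X × ℂ => (w.1, ‖w.2‖)) (𝓝 (x₀, 0)) (𝓝 (x₀, 0)) := by
    simpa using (continuous_fst.prodMk (continuous_norm.comp continuous_snd)).tendsto (x₀, (0 : ℂ))
  refine ⟨C + 1, ?_⟩
  filter_upwards [hpolar.eventually hK] with w hw
  exact (hw _ ⟨(neg_pi_lt_arg _).le, arg_le_pi _⟩).le

variable {V E : Type*} [NormedAddCommGroup E] [NormedSpace ℝ E]

def polarLift (M : ℕ) (H : V × ℝ × ℝ → E) (w : V × ℂ) : E :=
  if w.2 = 0 then 0 else ‖w.2‖ ^ M • H (w.1, arg w.2, ‖w.2‖)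

def logPolar (M : ℕ) (H : V × ℝ × ℝ → E) (q : V × ℂ) : E :=
  Real.exp (M * q.2.re) • H (q.1, q.2.im, Real.exp q.2.re)

variable {H : V × ℝ × ℝ → E}

theorem polarLift_exp (hper : ∀ v θ τ, H (v, θ + 2 * π, τ) = H (v, θ, τ)) (M : ℕ)
    (v : V) (ζ : ℂ) : polarLift M H (v, cexp ζ) = logPolar M H (v, ζ) := by
  have hθ : Function.Periodic (fun θ => H (v, θ, Real.exp ζ.re)) (2 * π) :=
    fun θ => hper v θ _
  simp only [polarLift, logPolar, Complex.exp_ne_zero, if_false, norm_exp, arg_exp,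
    ← Real.exp_nat_mul, toIocMod, hθ.sub_zsmul_eq]

variable [NormedAddCommGroup V]

theorem polarLift_isBigO (hH : Continuous H) (M : ℕ) (v₀ : V) :
    polarLift M H =O[𝓝 (v₀, 0)] fun w => ‖w - (v₀, 0)‖ ^ M := by
  obtain ⟨C, hC⟩ := exists_eventually_norm_le hH v₀
  refine Asymptotics.IsBigO.of_bound C ?_
  filter_upwards [hC] with w hw
  have hC0 : 0 ≤ C := (norm_nonneg _).trans hw
  have hsnd : ‖w.2‖ ≤ ‖w - (v₀, 0)‖ := by simpa using _root_.norm_snd_le (w - (v₀, (0 : ℂ)))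
  unfold polarLift
  split_ifs
  · simp only [norm_zero]; positivity
  · rw [norm_smul, norm_pow, norm_norm, norm_pow, norm_norm, mul_comm C]
    gcongr

theorem continuousAt_polarLift_zero (hH : Continuous H) {M : ℕ} (hM : M ≠ 0) (v₀ : V) :
    ContinuousAt (polarLift M H) (v₀, 0) := by
  have hlim : Tendsto (fun w : V × ℂ => ‖w - (v₀, 0)‖ ^ M) (𝓝 (v₀, 0)) (𝓝 0) := by
    have hcont : Continuous fun w : V × ℂ => ‖w - (v₀, 0)‖ ^ M := by fun_prop
    simpa [hM] using hcont.tendsto (v₀, 0)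
  simpa [ContinuousAt, polarLift] using (polarLift_isBigO hH M v₀).trans_tendsto hlim

variable [NormedSpace ℝ V]

theorem contDiff_logPolar (hH : ContDiff ℝ ∞ H) (M : ℕ) : ContDiff ℝ ∞ (logPolar M H) := by
  have hre : ContDiff ℝ ∞ re := reCLM.contDiff
  have him : ContDiff ℝ ∞ im := imCLM.contDiff
  unfold logPolar
  fun_prop

theorem hasFDerivAt_logPolar (hH : ContDiff ℝ ∞ H) (M : ℕ) (q : V × ℂ) :
    HasFDerivAt (logPolar M H)
      (Real.exp (M * q.2.re) • (fderiv ℝ H (q.1, q.2.im, Real.exp q.2.re)).comp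
          ((fst ℝ V ℂ).prod ((imCLM.comp (snd ℝ V ℂ)).prod
            (Real.exp q.2.re • reCLM.comp (snd ℝ V ℂ)))) +
        (Real.exp (M * q.2.re) • (M : ℝ) • reCLM.comp (snd ℝ V ℂ)).smulRight
          (H (q.1, q.2.im, Real.exp q.2.re))) q := by
  have hre : HasFDerivAt (fun q : V × ℂ => q.2.re) (reCLM.comp (snd ℝ V ℂ)) q :=
    (reCLM.comp (snd ℝ V ℂ)).hasFDerivAt
  have him : HasFDerivAt (fun q : V × ℂ => q.2.im) (imCLM.comp (snd ℝ V ℂ)) q :=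
    (imCLM.comp (snd ℝ V ℂ)).hasFDerivAt
  have hscale := (Real.hasDerivAt_exp _).comp_hasFDerivAt q (hre.const_mul (M : ℝ))
  have hpolar := hasFDerivAt_fst.prodMk
    (him.prodMk ((Real.hasDerivAt_exp _).comp_hasFDerivAt q hre))
  exact hscale.smul (((hH.differentiable (by simp)) _).hasFDerivAt.comp q hpolar)

theorem hasFDerivAt_polarLift_exp (hH : ContDiff ℝ ∞ H)
    (hper : ∀ v θ τ, H (v, θ + 2 * π, τ) = H (v, θ, τ)) (M : ℕ) (v : V) (ζ : ℂ) :
    HasFDerivAt (polarLift M H)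
      ((fderiv ℝ (logPolar M H) (v, ζ)).comp ((fst ℝ V ℂ).prod ((cexp ζ)⁻¹ • snd ℝ V ℂ)))
      (v, cexp ζ) := by
  set z := cexp ζ
  have hz : z ≠ 0 := Complex.exp_ne_zero ζ
  -- `w ↦ ζ + log (w / z)` is a branch of the logarithm near `z` taking the value `ζ` at `z`
  let branch : V × ℂ → V × ℂ := fun w => (w.1, ζ + log (z⁻¹ * w.2))
  have h_branch : HasFDerivAt branch ((fst ℝ V ℂ).prod (z⁻¹ • snd ℝ V ℂ)) (v, z) := by
    have hlin : HasFDerivAt (fun w : V × ℂ => z⁻¹ * w.2) (z⁻¹ • snd ℝ V ℂ) (v, z) :=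
      (z⁻¹ • snd ℝ V ℂ).hasFDerivAt
    have hlog : HasFDerivAt Complex.log (1 : ℂ →L[ℝ] ℂ) (z⁻¹ * (v, z).2) := by
      have := (hasStrictFDerivAt_log_real (x := z⁻¹ * z) (by simp [hz])).hasFDerivAt
      rw [inv_mul_cancel₀ hz, inv_one, one_smul] at this
      simpa [hz] using this
    have hshift := (hlog.comp (v, z) hlin).const_add ζ
    rw [one_def, id_comp] at hshift
    exact hasFDerivAt_fst.prodMk hshift
  have h_eq : polarLift M H =ᶠ[𝓝 (v, z)] logPolar M H ∘ branch := by
    filter_upwards [(isOpen_ne.preimage continuous_snd).mem_nhds hz] with w hw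
    have hexp : cexp (ζ + log (z⁻¹ * w.2)) = w.2 := by
      rw [Complex.exp_add, Complex.exp_log (by simpa [hz] using hw), mul_inv_cancel_left₀ hz]
    rw [Function.comp_apply, ← polarLift_exp hper, hexp]
  have h_comp := ((contDiff_logPolar hH M).differentiable (by simp) (branch (v, z))).hasFDerivAt
    |>.comp (v, z) h_branch
  rw [show branch (v, z) = (v, ζ) by simp [branch, hz]] at h_comp
  exact h_comp.congr_of_eventuallyEq h_eq

def rotateBack (θ : ℝ) : V × ℂ →L[ℝ] ℂ :=
  (ContinuousLinearMap.mul ℝ ℂ (cexp (-(θ * I)))).comp (snd ℝ V ℂ)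

/-- With `w = e^{-iθ} ζ`, a displacement `ζ` of `z = r e^{iθ}` moves `r` by `Re w` and `θ` by
`Im w / r`; clearing the denominator gives `polarDeriv M H (v, θ, r)`, which is `r^{1-M}` times
the derivative of `polarLift M H` at `(v, r e^{iθ})`. -/
def polarDeriv (M : ℕ) (H : V × ℝ × ℝ → E) (p : V × ℝ × ℝ) : V × ℂ →L[ℝ] E :=
  ((M : ℝ) • reCLM.comp (rotateBack p.2.1)).smulRight (H p) +
    (fderiv ℝ H p).comp ((p.2.2 • fst ℝ V ℂ).prod
      ((imCLM.comp (rotateBack p.2.1)).prod (p.2.2 • reCLM.comp (rotateBack p.2.1))))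

theorem fderiv_logPolar_comp (hH : ContDiff ℝ ∞ H) (N : ℕ) (v : V) (ζ : ℂ) :
    (fderiv ℝ (logPolar (N + 1) H) (v, ζ)).comp ((fst ℝ V ℂ).prod ((cexp ζ)⁻¹ • snd ℝ V ℂ)) =
      Real.exp (N * ζ.re) • polarDeriv (N + 1) H (v, ζ.im, Real.exp ζ.re) := by
  rw [(hasFDerivAt_logPolar hH _ _).fderiv]
  refine ContinuousLinearMap.ext fun ⟨u, η⟩ => ?_
  set s := Real.exp ζ.re
  have hs : s ≠ 0 := (Real.exp_pos _).ne'
  have hw : (cexp ζ)⁻¹ * η = ((s⁻¹ : ℝ) : ℂ) * (cexp (-(ζ.im * I)) * η) := by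
    rw [← Complex.exp_neg, ← Real.exp_neg, ofReal_exp, ← mul_assoc, ← Complex.exp_add]
    congr 2
    conv_lhs => rw [← re_add_im ζ]
    push_cast
    ring
  have hscale : Real.exp ((N + 1 : ℕ) * ζ.re) = Real.exp (N * ζ.re) * s := by
    rw [← Real.exp_add]; push_cast; ring_nf
  simp only [polarDeriv, rotateBack, comp_apply, add_apply, FunLike.coe_smul, Pi.smul_apply,
    smulRight_apply, prod_apply, coe_fst', coe_snd', mul_apply', reCLM_apply, imCLM_apply,
    smul_eq_mul, hw, re_ofReal_mul, im_ofReal_mul, hscale]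
  set w := cexp (-(ζ.im * I)) * η
  have hvec : ((u, s⁻¹ * w.im, s * (s⁻¹ * w.re)) : V × ℝ × ℝ) =
      s⁻¹ • (s • u, w.im, s * w.re) := by
    ext <;> simp [smul_smul, hs]
  rw [hvec, map_smul]
  match_scalars <;> field_simp

theorem fderiv_periodic (hper : ∀ v θ τ, H (v, θ + 2 * π, τ) = H (v, θ, τ)) (v : V) (θ τ : ℝ) :
    fderiv ℝ H (v, θ + 2 * π, τ) = fderiv ℝ H (v, θ, τ) := by
  have hshift : (fun x => H (x + (0, 2 * π, 0))) = H :=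
    funext fun ⟨v, θ, τ⟩ => by simpa using hper v θ τ
  simpa [hshift] using (fderiv_comp_add_right (f := H) (x := (v, θ, τ)) (0, 2 * π, 0)).symm

theorem polarDeriv_periodic (hper : ∀ v θ τ, H (v, θ + 2 * π, τ) = H (v, θ, τ)) (M : ℕ)
    (v : V) (θ τ : ℝ) : polarDeriv M H (v, θ + 2 * π, τ) = polarDeriv M H (v, θ, τ) := by
  have hrot : cexp (-(((θ + 2 * π : ℝ) : ℂ) * I)) = cexp (-(θ * I)) := by
    rw [show -(((θ + 2 * π : ℝ) : ℂ) * I) = -(θ * I) - 2 * π * I by push_cast; ring,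
      Complex.exp_sub, exp_two_pi_mul_I, div_one]
  simp only [polarDeriv, rotateBack, hrot, hper, fderiv_periodic hper]

theorem contDiff_polarDeriv (hH : ContDiff ℝ ∞ H) (M : ℕ) : ContDiff ℝ ∞ (polarDeriv M H) := by
  have hofReal : ContDiff ℝ ∞ ((↑) : ℝ → ℂ) := ofRealCLM.contDiff
  have hrot : ContDiff ℝ ∞ (fun θ : ℝ => rotateBack (V := V) θ) :=
    ((ContinuousLinearMap.mul ℝ ℂ).contDiff.comp (by fun_prop)).clm_comp contDiff_const
  unfold polarDeriv
  fun_prop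

theorem hasFDerivAt_polarLift_of_ne_zero (hH : ContDiff ℝ ∞ H)
    (hper : ∀ v θ τ, H (v, θ + 2 * π, τ) = H (v, θ, τ)) (N : ℕ) (v : V) {z : ℂ} (hz : z ≠ 0) :
    HasFDerivAt (polarLift (N + 1) H) (polarLift N (polarDeriv (N + 1) H) (v, z)) (v, z) := by
  obtain ⟨ζ, rfl⟩ : ∃ ζ, cexp ζ = z := ⟨log z, exp_log hz⟩
  rw [polarLift_exp (polarDeriv_periodic hper _), logPolar, ← fderiv_logPolar_comp hH]
  exact hasFDerivAt_polarLift_exp hH hper _ v ζ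

theorem hasFDerivAt_polarLift (hH : ContDiff ℝ ∞ H)
    (hper : ∀ v θ τ, H (v, θ + 2 * π, τ) = H (v, θ, τ)) {N : ℕ} (hN : N ≠ 0) (w : V × ℂ) :
    HasFDerivAt (polarLift (N + 1) H) (polarLift N (polarDeriv (N + 1) H) w) w := by
  obtain ⟨v, z⟩ := w
  rcases eq_or_ne z 0 with rfl | hz
  · simpa [polarLift] using (polarLift_isBigO hH.continuous (N + 1) v).hasFDerivAt (by omega)
  · exact hasFDerivAt_polarLift_of_ne_zero hH hper N v hz

universe u

theorem contDiff_polarLift {V : Type u} [NormedAddCommGroup V] [NormedSpace ℝ V] (m : ℕ) :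
    ∀ {E : Type u} [NormedAddCommGroup E] [NormedSpace ℝ E] {H : V × ℝ × ℝ → E},
      ContDiff ℝ ∞ H → (∀ v θ τ, H (v, θ + 2 * π, τ) = H (v, θ, τ)) →
      ContDiff ℝ m (polarLift (m + 1) H) := by
  induction m with
  | zero =>
    intro E _ _ H hH hper
    rw [Nat.cast_zero, contDiff_zero, continuous_iff_continuousAt]
    rintro ⟨v, z⟩
    rcases eq_or_ne z 0 with rfl | hz
    · exact continuousAt_polarLift_zero hH.continuous one_ne_zero v
    · exact (hasFDerivAt_polarLift_of_ne_zero hH hper 0 v hz).continuousAt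
  | succ m ih =>
    intro E _ _ H hH hper
    have hderiv := hasFDerivAt_polarLift hH hper m.succ_ne_zero
    rw [Nat.cast_succ, contDiff_succ_iff_fderiv]
    refine ⟨fun w => (hderiv w).differentiableAt, by simp, ?_⟩
    rw [funext fun w => (hderiv w).fderiv]
    exact ih (contDiff_polarDeriv hH _) (polarDeriv_periodic hper _)

end PolarLift

/-- if `G(v,θ,τ)` is smooth and `2π`-periodic in `θ`, then the
function `G̃(v,z) = |z|^{2k} G(v, arg z, |z|²)` (extended by `0` at `z = 0`) is
of class `C^k` on `ℝ^d × ℂ`. -/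
theorem statement8 (d k : ℕ) (hk : 1 ≤ k)
    (G : (Fin d → ℝ) × ℝ × ℝ → ℝ) (hG : ContDiff ℝ (⊤ : ℕ∞) G)
    (hper : ∀ (v : Fin d → ℝ) (θ τ : ℝ), G (v, θ + 2 * π, τ) = G (v, θ, τ)) :
    ContDiff ℝ (k : ℕ∞) (fun w : (Fin d → ℝ) × ℂ =>
      if w.2 = 0 then (0 : ℝ)
      else ‖w.2‖ ^ (2 * k) * G (w.1, Complex.arg w.2, ‖w.2‖ ^ 2)) := by
  let H : (Fin d → ℝ) × ℝ × ℝ → ℝ := fun p => G (p.1, p.2.1, p.2.2 ^ 2)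
  have hH : ContDiff ℝ (⊤ : ℕ∞) H := hG.comp (by fun_prop)
  have hlift := PolarLift.contDiff_polarLift (2 * k - 1) hH fun v θ τ => hper v θ (τ ^ 2)
  rw [show 2 * k - 1 + 1 = 2 * k by omega] at hlift
  exact hlift.of_le (WithTop.coe_le_coe.2 (Nat.cast_le.2 (by omega)))
end
end

section
/- Fix integers d ≥ 0 and k ≥ 1. Let Q : ℝ^d × ℝ × ℝ → ℝ, written Q(v,θ,τ), be smooth and 2π-periodic in θ (Q(v,θ+2π,τ) = Q(v,θ,τ) for all (v,θ,τ)), and suppose there is a smooth function F : ℝ^d × ℝ × ℝ → ℝ such that ∂Q/∂θ(v,θ,τ) = τ^k F(v,θ,τ) for all (v,θ,τ). Then there exist smooth functions G₁ : ℝ^d × ℝ × ℝ → ℝ, 2π-periodic in θ, and G₂ : ℝ^d × ℝ → ℝ (independent of θ) such that Q(v,θ,τ) = τ^k G₁(v,θ,τ) + G₂(v,τ) for all (v,θ,τ). -/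
/-!
Take `G₂(v,τ) = Q(v,0,τ)` and `G₁(v,θ,τ) = ∫₀^θ F(v,s,τ) ds`; the fundamental theorem of
calculus in `θ` gives `Q = τ^k G₁ + G₂`. Writing `G₁` as `θ ∫₀¹ F(v,θt,τ) dt` moves the variable
endpoint into the integrand, so its smoothness is differentiation under a fixed-interval integral.
Periodicity of `Q` gives `τ^k G₁(v,θ+2π,τ) = τ^k G₁(v,θ,τ)`, hence periodicity of `G₁` for
`τ ≠ 0`, and then for all `τ` by continuity.
-/

open Real ContinuousLinearMap Metric

universe u

section ParametricIntegral

variable {E V : Type u} [NormedAddCommGroup E] [NormedSpace ℝ E] [ProperSpace E]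
  [NormedAddCommGroup V] [NormedSpace ℝ V] {f : E × ℝ → V} {a b : ℝ}

theorem hasFDerivAt_intervalIntegral_of_contDiff (hf : ContDiff ℝ 1 f) (x₀ : E) :
    HasFDerivAt (fun x => ∫ t in a..b, f (x, t))
      (∫ t in a..b, (fderiv ℝ f (x₀, t)).comp (inl ℝ E ℝ)) x₀ := by
  set f' : E × ℝ → E →L[ℝ] V := fun p => (fderiv ℝ f p).comp (inl ℝ E ℝ)
  have hf' : Continuous f' := (hf.continuous_fderiv one_ne_zero).clm_comp continuous_const
  obtain ⟨M, hM⟩ := ((isCompact_closedBall x₀ 1).prod (isCompact_uIcc (a := a) (b := b))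
    |>.exists_bound_of_continuousOn hf'.continuousOn)
  refine intervalIntegral.hasFDerivAt_integral_of_dominated_of_fderiv_le
    (F' := fun x t => f' (x, t)) (bound := fun _ => M) (ball_mem_nhds x₀ one_pos)
    (.of_forall fun x => (hf.continuous.comp (.prodMk_right x)).aestronglyMeasurable)
    ((hf.continuous.comp (.prodMk_right x₀)).intervalIntegrable _ _)
    (hf'.comp (.prodMk_right x₀)).aestronglyMeasurable
    (.of_forall fun t ht x hx => hM (x, t) ⟨ball_subset_closedBall hx, Set.uIoc_subset_uIcc ht⟩)
    intervalIntegrable_const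
    (.of_forall fun t _ x _ => ?_)
  exact (hf.differentiable one_ne_zero (x, t)).hasFDerivAt.comp x (hasFDerivAt_prodMk_left x t)

-- `V` lives in the universe of `E` because the induction replaces it by `E →L[ℝ] V`.
theorem contDiff_intervalIntegral_of_contDiff_nat (n : ℕ) :
    ∀ {V : Type u} [NormedAddCommGroup V] [NormedSpace ℝ V] [CompleteSpace V] {f : E × ℝ → V},
    ContDiff ℝ n f → ContDiff ℝ n (fun x => ∫ t in a..b, f (x, t)) := by
  induction n with
  | zero =>
    intro V _ _ _ f hf
    exact contDiff_zero.mpr <|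
      intervalIntegral.continuous_parametric_intervalIntegral_of_continuous'
        (f := fun x t => f (x, t)) (contDiff_zero.mp hf) a b
  | succ n ih =>
    intro V _ _ _ f hf
    have hf1 : ContDiff ℝ 1 f := hf.of_le (by exact_mod_cast Nat.le_add_left 1 n)
    have hderiv : fderiv ℝ (fun x => ∫ t in a..b, f (x, t))
        = fun x => ∫ t in a..b, (fderiv ℝ f (x, t)).comp (inl ℝ E ℝ) :=
      funext fun x => (hasFDerivAt_intervalIntegral_of_contDiff hf1 x).fderiv
    rw [Nat.cast_add_one, contDiff_succ_iff_fderiv, hderiv]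
    refine ⟨fun x => (hasFDerivAt_intervalIntegral_of_contDiff hf1 x).differentiableAt,
      by simp, ih (f := fun p => (fderiv ℝ f p).comp (inl ℝ E ℝ)) ?_⟩
    exact (hf.fderiv_right le_rfl).clm_comp contDiff_const

theorem contDiff_intervalIntegral_of_contDiff [CompleteSpace V] {n : ℕ∞} (hf : ContDiff ℝ n f) :
    ContDiff ℝ n (fun x => ∫ t in a..b, f (x, t)) := by
  induction n using ENat.recTopCoe with
  | top =>
    exact contDiff_infty.mpr fun n =>
      contDiff_intervalIntegral_of_contDiff_nat n (contDiff_infty.mp hf n)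
  | coe n => exact contDiff_intervalIntegral_of_contDiff_nat n hf

end ParametricIntegral

theorem sub_eq_smul_integral_comp_mul {E : Type*} [NormedAddCommGroup E] [NormedSpace ℝ E]
    [CompleteSpace E] {g g' : ℝ → E} (hg : ∀ x, HasDerivAt g (g' x) x) (hg' : Continuous g')
    (θ : ℝ) : g θ - g 0 = θ • ∫ t in (0 : ℝ)..1, g' (θ * t) := by
  rw [intervalIntegral.smul_integral_comp_mul_left, mul_zero, mul_one,
    intervalIntegral.integral_eq_sub_of_hasDerivAt (fun x _ => hg x) (hg'.intervalIntegrable _ _)]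

theorem eq_of_forall_pow_mul_eq {a b : ℝ → ℝ} (ha : Continuous a) (hb : Continuous b) (k : ℕ)
    (h : ∀ τ, τ ^ k * a τ = τ ^ k * b τ) : a = b :=
  Continuous.ext_on (dense_compl_singleton 0) ha hb fun τ hτ =>
    mul_left_cancel₀ (pow_ne_zero k hτ) (h τ)

theorem statement10_general (d k : ℕ)
    (Q F : (Fin d → ℝ) × ℝ × ℝ → ℝ)
    (hQ : ContDiff ℝ (⊤ : ℕ∞) Q) (hF : ContDiff ℝ (⊤ : ℕ∞) F)
    (hper : ∀ (v : Fin d → ℝ) (θ τ : ℝ), Q (v, θ + 2 * π, τ) = Q (v, θ, τ))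
    (hbr : ∀ (v : Fin d → ℝ) (θ τ : ℝ),
      deriv (fun θ' => Q (v, θ', τ)) θ = τ ^ k * F (v, θ, τ)) :
    ∃ (G₁ : (Fin d → ℝ) × ℝ × ℝ → ℝ) (G₂ : (Fin d → ℝ) × ℝ → ℝ),
      ContDiff ℝ (⊤ : ℕ∞) G₁ ∧ ContDiff ℝ (⊤ : ℕ∞) G₂ ∧
      (∀ (v : Fin d → ℝ) (θ τ : ℝ), G₁ (v, θ + 2 * π, τ) = G₁ (v, θ, τ)) ∧
      ∀ (v : Fin d → ℝ) (θ τ : ℝ), Q (v, θ, τ) = τ ^ k * G₁ (v, θ, τ) + G₂ (v, τ) := by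
  set G₁ : (Fin d → ℝ) × ℝ × ℝ → ℝ :=
    fun p => p.2.1 * ∫ t in (0 : ℝ)..1, F (p.1, p.2.1 * t, p.2.2)
  have hG₁ : ContDiff ℝ (⊤ : ℕ∞) G₁ := by
    have hF' : ContDiff ℝ (⊤ : ℕ∞)
        fun q : ((Fin d → ℝ) × ℝ × ℝ) × ℝ => F (q.1.1, q.1.2.1 * q.2, q.1.2.2) := by
      fun_prop
    exact contDiff_snd.fst.mul (contDiff_intervalIntegral_of_contDiff hF')
  have hQd : Differentiable ℝ Q := hQ.differentiable (by simp)
  have hdecomp : ∀ v θ τ, Q (v, θ, τ) = τ ^ k * G₁ (v, θ, τ) + Q (v, 0, τ) := by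
    intro v θ τ
    have hQθ : ∀ θ, HasDerivAt (fun θ' => Q (v, θ', τ)) (τ ^ k * F (v, θ, τ)) θ := fun θ =>
      hbr v θ τ ▸ (hQd.comp (by fun_prop)).differentiableAt.hasDerivAt
    have := sub_eq_smul_integral_comp_mul hQθ (by fun_prop) θ
    simp only [G₁, smul_eq_mul, intervalIntegral.integral_const_mul] at this ⊢
    linarith
  refine ⟨G₁, fun p => Q (p.1, 0, p.2), hG₁, hQ.comp (by fun_prop), fun v θ τ => ?_, hdecomp⟩
  have hG₁c := hG₁.continuous
  refine congrFun (eq_of_forall_pow_mul_eq (a := fun τ => G₁ (v, θ + 2 * π, τ))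
    (b := fun τ => G₁ (v, θ, τ)) (by fun_prop) (by fun_prop) k fun τ => ?_) τ
  have := hdecomp v (θ + 2 * π) τ
  rw [hper, hdecomp v θ τ] at this
  exact (add_right_cancel this).symm

/-- if `Q(v,θ,τ)` is smooth, `2π`-periodic in `θ`, and
`∂Q/∂θ = τ^k F` for some smooth `F`, then `Q` decomposes as
`Q(v,θ,τ) = τ^k G₁(v,θ,τ) + G₂(v,τ)` with `G₁` smooth and `2π`-periodic in `θ`
and `G₂` smooth and independent of `θ`. -/
theorem statement10 (d k : ℕ) (hk : 1 ≤ k)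
    (Q F : (Fin d → ℝ) × ℝ × ℝ → ℝ)
    (hQ : ContDiff ℝ (⊤ : ℕ∞) Q) (hF : ContDiff ℝ (⊤ : ℕ∞) F)
    (hper : ∀ (v : Fin d → ℝ) (θ τ : ℝ), Q (v, θ + 2 * π, τ) = Q (v, θ, τ))
    (hbr : ∀ (v : Fin d → ℝ) (θ τ : ℝ),
      deriv (fun θ' => Q (v, θ', τ)) θ = τ ^ k * F (v, θ, τ)) :
    ∃ (G₁ : (Fin d → ℝ) × ℝ × ℝ → ℝ) (G₂ : (Fin d → ℝ) × ℝ → ℝ),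
      ContDiff ℝ (⊤ : ℕ∞) G₁ ∧ ContDiff ℝ (⊤ : ℕ∞) G₂ ∧
      (∀ (v : Fin d → ℝ) (θ τ : ℝ), G₁ (v, θ + 2 * π, τ) = G₁ (v, θ, τ)) ∧
      ∀ (v : Fin d → ℝ) (θ τ : ℝ), Q (v, θ, τ) = τ ^ k * G₁ (v, θ, τ) + G₂ (v, τ) :=
  statement10_general d k Q F hQ hF hper hbr
end

section
/- Let P, Q : ℝ^{2n} → ℝ be smooth functions. Assume: (i) the differential dP(z) is nonzero at every point z of Z := P^{−1}(0) (0 is a regular value of P); (ii) {P,Q}(z) = 0 for every z ∈ Z (equivalently, the Hamiltonian vector field Ξ_Q is tangent to the hypersurface Z); (iii) P and Q admit global Hamiltonian flows φ^P and φ^Q. Then the following are equivalent: (a) for every z ∈ Z and all s, t ∈ ℝ, φ^P(s, φ^Q(t,z)) = φ^Q(t, φ^P(s,z)) (the two Hamiltonian flows commute on the boundary hypersurface); (b) there exists a smooth function F : ℝ^{2n} → ℝ such that {P,Q} = P² · F (the Poisson bracket {P,Q} vanishes to second order at Z). -/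
open Real

noncomputable section

/-- The Poisson bracket `{P,Q}(x,p) = Σᵢ (∂P/∂pᵢ ∂Q/∂xᵢ − ∂P/∂xᵢ ∂Q/∂pᵢ)` on
`ℝ^{2n} = ℝ^n × ℝ^n`. -/
def poissonBracket (n : ℕ) (P Q : (Fin n → ℝ) × (Fin n → ℝ) → ℝ)
    (z : (Fin n → ℝ) × (Fin n → ℝ)) : ℝ :=
  ∑ i : Fin n,
    (fderiv ℝ P z (0, Pi.single i 1) * fderiv ℝ Q z (Pi.single i 1, 0) -
      fderiv ℝ P z (Pi.single i 1, 0) * fderiv ℝ Q z (0, Pi.single i 1))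

/-- The Hamiltonian vector field `Ξ_P(x,p) = (∂P/∂p, −∂P/∂x)`. -/
def hamVectorField (n : ℕ) (P : (Fin n → ℝ) × (Fin n → ℝ) → ℝ)
    (z : (Fin n → ℝ) × (Fin n → ℝ)) : (Fin n → ℝ) × (Fin n → ℝ) :=
  (fun i => fderiv ℝ P z (0, Pi.single i 1), fun i => -fderiv ℝ P z (Pi.single i 1, 0))

/-- `φ` is a global Hamiltonian flow for `P`: a smooth map `ℝ × ℝ^{2n} → ℝ^{2n}`
with `φ(0,z) = z` and `∂ₜφ(t,z) = Ξ_P(φ(t,z))`. -/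
def IsHamFlow (n : ℕ) (P : (Fin n → ℝ) × (Fin n → ℝ) → ℝ)
    (φ : ℝ → (Fin n → ℝ) × (Fin n → ℝ) → (Fin n → ℝ) × (Fin n → ℝ)) : Prop :=
  ContDiff ℝ (⊤ : ℕ∞) (fun q : ℝ × ((Fin n → ℝ) × (Fin n → ℝ)) => φ q.1 q.2) ∧
  (∀ z, φ 0 z = z) ∧
  ∀ t z, HasDerivAt (fun t' => φ t' z) (hamVectorField n P (φ t z)) t

/-!
Differentiating the commutation relation at `s = t = 0` shows that flows commuting on `Z` have
commuting linearised fields there: `DΞ_P(Ξ_Q) = DΞ_Q(Ξ_P)`. Since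
`DΞ_Q(Ξ_P) - DΞ_P(Ξ_Q) = Ξ_{P,Q}`, this says `d{P,Q} = 0` on `Z`; with `{P,Q} = 0` on `Z` and
`0` a regular value of `P`, Hadamard's lemma applied twice gives `{P,Q} = P² F`.

Conversely, if `{P,Q} = P² F` then `dP(Ξ_Q) = -P² F`, so by Grönwall `Z` is invariant under
`φᵠ` (as it is under `φᴾ`), and `d{P,Q} = 0` on `Z`. Along a `φᴾ`-orbit in `Z`, the variational
equation and Grönwall show that `Dφᴾₛ` maps `Ξ_Q` to `Ξ_Q`. Hence `t ↦ φᴾₛ (φᵠₜ z)` and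
`t ↦ φᵠₜ (φᴾₛ z)` solve the same `Ξ_Q`-equation with the same initial value, and coincide.
-/

open Filter Metric Set Topology MeasureTheory
open scoped ContDiff

section ODE

variable {E : Type*} [NormedAddCommGroup E] [NormedSpace ℝ E]

theorem eq_zero_of_hasDerivAt_of_norm_le_mul_of_nonneg {f f' : ℝ → E} {k : ℝ → ℝ}
    (hk : Continuous k) (hf : ∀ t, HasDerivAt f (f' t) t)
    (hbound : ∀ t, ‖f' t‖ ≤ k t * ‖f t‖) (h0 : f 0 = 0) {t : ℝ} (ht : 0 ≤ t) : f t = 0 := by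
  obtain ⟨C, hC⟩ :=
    (isCompact_Icc (a := 0) (b := t)).exists_bound_of_continuousOn hk.continuousOn
  have hgronwall := norm_le_gronwallBound_of_norm_deriv_right_le (δ := 0) (K := C) (ε := 0)
    (fun s _ => (hf s).continuousAt.continuousWithinAt) (fun s _ => (hf s).hasDerivWithinAt)
    (by simp [h0]) (fun s hs => by
      rw [add_zero]
      exact (hbound s).trans (mul_le_mul_of_nonneg_right
        ((le_abs_self _).trans (hC s (Ico_subset_Icc_self hs))) (norm_nonneg _)))
    t ⟨ht, le_rfl⟩
  rw [gronwallBound_ε0_δ0] at hgronwall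
  exact norm_le_zero_iff.1 hgronwall

theorem eq_zero_of_hasDerivAt_of_norm_le_mul {f f' : ℝ → E} {k : ℝ → ℝ} (hk : Continuous k)
    (hf : ∀ t, HasDerivAt f (f' t) t) (hbound : ∀ t, ‖f' t‖ ≤ k t * ‖f t‖) (h0 : f 0 = 0)
    (t : ℝ) : f t = 0 := by
  rcases le_total 0 t with ht | ht
  · exact eq_zero_of_hasDerivAt_of_norm_le_mul_of_nonneg hk hf hbound h0 ht
  · have hrev : ∀ s, HasDerivAt (fun s => f (-s)) (-f' (-s)) s := fun s => by
      simpa [Function.comp_def] using (hf (-s)).scomp s (hasDerivAt_neg s)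
    simpa using eq_zero_of_hasDerivAt_of_norm_le_mul_of_nonneg (hk.comp continuous_neg) hrev
      (fun s => by simpa using hbound (-s)) (by simpa using h0) (neg_nonneg.2 ht)

theorem ODE_solution_unique_of_contDiff {V : E → E} (hV : ContDiff ℝ 1 V) {f g : ℝ → E}
    (hf : ∀ t, HasDerivAt f (V (f t)) t) (hg : ∀ t, HasDerivAt g (V (g t)) t) {t₀ : ℝ}
    (h : f t₀ = g t₀) : f = g := by
  have hfc : Continuous f := continuous_iff_continuousAt.2 fun t => (hf t).continuousAt
  have hgc : Continuous g := continuous_iff_continuousAt.2 fun t => (hg t).continuousAt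
  have hopen : IsOpen {t | f t = g t} := by
    refine isOpen_iff_mem_nhds.2 fun t (ht : f t = g t) => ?_
    obtain ⟨K, s, hs, hlip⟩ := hV.contDiffAt.exists_lipschitzOnWith (x := f t)
    refine ODE_solution_unique_of_eventually (v := fun _ => V) (s := fun _ => s)
      (Eventually.of_forall fun _ => hlip) ?_ ?_ ht
    · filter_upwards [hfc.continuousAt.preimage_mem_nhds hs] with t' ht' using ⟨hf t', ht'⟩
    · filter_upwards [hgc.continuousAt.preimage_mem_nhds (ht ▸ hs)] with t' ht'
        using ⟨hg t', ht'⟩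
  have huniv := IsClopen.eq_univ ⟨isClosed_eq hfc hgc, hopen⟩ ⟨t₀, h⟩
  exact funext fun t => (huniv.symm ▸ mem_univ t : t ∈ {t | f t = g t})

end ODE

section Flow

open Function

variable {E : Type*} [NormedAddCommGroup E] [NormedSpace ℝ E]

def IsFlow (V : E → E) (φ : ℝ → E → E) : Prop :=
  ContDiff ℝ ∞ (uncurry φ) ∧ (∀ z, φ 0 z = z) ∧
    ∀ t z, HasDerivAt (fun t' => φ t' z) (V (φ t z)) t

namespace IsFlow

variable {V W : E → E} {φ ψ : ℝ → E → E}

theorem contDiff_uncurry (hφ : IsFlow V φ) : ContDiff ℝ ∞ (uncurry φ) := hφ.1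

theorem apply_zero (hφ : IsFlow V φ) (z : E) : φ 0 z = z := hφ.2.1 z

theorem hasDerivAt (hφ : IsFlow V φ) (t : ℝ) (z : E) :
    HasDerivAt (fun t => φ t z) (V (φ t z)) t :=
  hφ.2.2 t z

theorem hasFDerivAt_uncurry (hφ : IsFlow V φ) (q : ℝ × E) :
    HasFDerivAt (uncurry φ) (fderiv ℝ (uncurry φ) q) q :=
  (hφ.contDiff_uncurry.differentiable (by simp) q).hasFDerivAt

theorem fderiv_uncurry_apply_left (hφ : IsFlow V φ) (q : ℝ × E) :
    fderiv ℝ (uncurry φ) q (1, 0) = V (uncurry φ q) := by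
  have h := (hφ.hasFDerivAt_uncurry q).comp_hasDerivAt q.1
    ((hasDerivAt_id q.1).prodMk (hasDerivAt_const q.1 q.2))
  exact h.unique (hφ.hasDerivAt q.1 q.2)

theorem hasFDerivAt_apply (hφ : IsFlow V φ) (s : ℝ) (z : E) :
    HasFDerivAt (φ s) ((fderiv ℝ (uncurry φ) (s, z)).comp (ContinuousLinearMap.inr ℝ ℝ E)) z :=
  (hφ.hasFDerivAt_uncurry (s, z)).comp z (hasFDerivAt_prodMk_right s z)

theorem fderiv_apply_eq (hφ : IsFlow V φ) (s : ℝ) (z v : E) :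
    fderiv ℝ (φ s) z v = fderiv ℝ (uncurry φ) (s, z) (0, v) := by
  rw [(hφ.hasFDerivAt_apply s z).fderiv]
  rfl

theorem continuous_orbit (hφ : IsFlow V φ) (z : E) : Continuous fun t => φ t z :=
  hφ.contDiff_uncurry.continuous.comp (continuous_id.prodMk continuous_const)

theorem fderiv_zero (hφ : IsFlow V φ) (z : E) :
    fderiv ℝ (φ 0) z = ContinuousLinearMap.id ℝ E := by
  rw [show φ 0 = id from funext hφ.apply_zero, fderiv_id]

/-- `V = ∂ₜφ(0, ·)`. -/
theorem contDiff_vectorField (hφ : IsFlow V φ) : ContDiff ℝ ∞ V := by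
  have hV : V = fun y => fderiv ℝ (uncurry φ) (0, y) (1, 0) := funext fun y => by
    rw [hφ.fderiv_uncurry_apply_left, uncurry_apply_pair, hφ.apply_zero]
  rw [hV]
  exact ((hφ.contDiff_uncurry.fderiv_right le_rfl).comp (contDiff_const.prodMk contDiff_id)).clm_apply
    contDiff_const

/-- The variational equation: the two partial derivatives of `(s, z) ↦ φ s z` commute. -/
theorem hasDerivAt_fderiv_apply (hφ : IsFlow V φ) (z v : E) (s : ℝ) :
    HasDerivAt (fun s => fderiv ℝ (φ s) z v) (fderiv ℝ V (φ s z) (fderiv ℝ (φ s) z v)) s := by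
  have hΦ2 : HasFDerivAt (fderiv ℝ (uncurry φ)) (fderiv ℝ (fderiv ℝ (uncurry φ)) (s, z)) (s, z) :=
    ((hφ.contDiff_uncurry.fderiv_right (m := ∞) (by norm_num)).differentiable (by simp) (s, z)).hasFDerivAt
  have hds : HasDerivAt (fun s => fderiv ℝ (uncurry φ) (s, z) (0, v))
      (fderiv ℝ (fderiv ℝ (uncurry φ)) (s, z) (1, 0) (0, v)) s := by
    have h := hΦ2.comp_hasDerivAt s ((hasDerivAt_id s).prodMk (hasDerivAt_const s z))
    simpa using h.clm_apply (hasDerivAt_const s ((0 : ℝ), v))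
  have hVΦ : (fun q => fderiv ℝ (uncurry φ) q (1, 0)) = V ∘ uncurry φ :=
    funext hφ.fderiv_uncurry_apply_left
  have hV : HasFDerivAt (fun q => fderiv ℝ (uncurry φ) q (1, 0))
      ((fderiv ℝ V (φ s z)).comp (fderiv ℝ (uncurry φ) (s, z))) (s, z) := by
    rw [hVΦ]
    exact (hφ.contDiff_vectorField.differentiable (by simp) _).hasFDerivAt.comp (s, z)
      (hφ.hasFDerivAt_uncurry (s, z))
  have hsymm : fderiv ℝ (fderiv ℝ (uncurry φ)) (s, z) (1, 0) (0, v) =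
      fderiv ℝ V (φ s z) (fderiv ℝ (uncurry φ) (s, z) (0, v)) := by
    have hmixed := (hΦ2.clm_apply (hasFDerivAt_const ((1 : ℝ), (0 : E)) (s, z))).unique hV
    rw [hφ.contDiff_uncurry.contDiffAt.isSymmSndFDerivAt (by
      rw [minSmoothness_of_isRCLikeNormedField]; exact WithTop.coe_le_coe.2 le_top) (1, 0) (0, v)]
    simpa using congrArg (fun L => L (0, v)) hmixed
  simp_rw [hφ.fderiv_apply_eq, ← hsymm]
  exact hds

theorem apply_eq_zero_of_fderiv_apply_eq_mul (hφ : IsFlow V φ) {f g : E → ℝ}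
    (hf : Differentiable ℝ f) (hg : Continuous g) (hfg : ∀ y, fderiv ℝ f y (V y) = g y * f y)
    {z : E} (hz : f z = 0) (t : ℝ) : f (φ t z) = 0 :=
  eq_zero_of_hasDerivAt_of_norm_le_mul (f := fun t => f (φ t z)) (k := fun t => |g (φ t z)|)
    (hg.comp (hφ.continuous_orbit z)).abs
    (fun t => (hf _).hasFDerivAt.comp_hasDerivAt t (hφ.hasDerivAt t z))
    (fun t => by rw [hfg, norm_mul, Real.norm_eq_abs])
    (by simpa [hφ.apply_zero] using hz) t

/-- Both sides solve `u' = DV(φ s z) u`, by the variational equation and `hlie`. -/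
theorem fderiv_apply_eq_of_lie (hφ : IsFlow V φ) (hW : ContDiff ℝ 1 W) {z : E}
    (hlie : ∀ s, fderiv ℝ V (φ s z) (W (φ s z)) = fderiv ℝ W (φ s z) (V (φ s z))) (s : ℝ) :
    fderiv ℝ (φ s) z (W z) = W (φ s z) := by
  have hD : ∀ s, HasDerivAt (fun s => fderiv ℝ (φ s) z (W z) - W (φ s z))
      (fderiv ℝ V (φ s z) (fderiv ℝ (φ s) z (W z) - W (φ s z))) s := fun s => by
    rw [map_sub, hlie]
    exact (hφ.hasDerivAt_fderiv_apply z (W z) s).sub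
      ((hW.differentiable one_ne_zero _).hasFDerivAt.comp_hasDerivAt s (hφ.hasDerivAt s z))
  have hk : Continuous fun s => ‖fderiv ℝ V (φ s z)‖ :=
    ((hφ.contDiff_vectorField.continuous_fderiv (by simp)).comp (hφ.continuous_orbit z)).norm
  exact sub_eq_zero.1 (eq_zero_of_hasDerivAt_of_norm_le_mul hk hD
    (fun s => ContinuousLinearMap.le_opNorm _ _)
    (by rw [hφ.fderiv_zero, hφ.apply_zero, ContinuousLinearMap.id_apply, sub_self]) s)

theorem apply_comm_of_lie (hφ : IsFlow V φ) (hψ : IsFlow W ψ) {z : E}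
    (hlie : ∀ s t, fderiv ℝ V (φ s (ψ t z)) (W (φ s (ψ t z))) =
      fderiv ℝ W (φ s (ψ t z)) (V (φ s (ψ t z)))) (s t : ℝ) :
    φ s (ψ t z) = ψ t (φ s z) := by
  have hW : ContDiff ℝ 1 W := hψ.contDiff_vectorField.of_le (by exact_mod_cast le_top)
  have hleft : ∀ t, HasDerivAt (fun t => φ s (ψ t z)) (W (φ s (ψ t z))) t := fun t => by
    rw [← hφ.fderiv_apply_eq_of_lie hW (fun s => hlie s t) s,
      (hφ.hasFDerivAt_apply s _).fderiv]
    exact (hφ.hasFDerivAt_apply s _).comp_hasDerivAt t (hψ.hasDerivAt t z)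
  have h0 : φ s (ψ 0 z) = ψ 0 (φ s z) := by rw [hψ.apply_zero, hψ.apply_zero]
  exact congrFun (ODE_solution_unique_of_contDiff hW hleft (fun t => hψ.hasDerivAt t (φ s z)) h0) t

/-- Differentiating `φ s ∘ ψ t = ψ t ∘ φ s` in `s` at `0` gives `V ∘ ψ t = Dψₜ V`; differentiating
that in `t` at `0` gives the claim, by the variational equation. -/
theorem lie_eq_of_apply_comm (hφ : IsFlow V φ) (hψ : IsFlow W ψ) {z : E}
    (hcomm : ∀ s t, φ s (ψ t z) = ψ t (φ s z)) :
    fderiv ℝ V z (W z) = fderiv ℝ W z (V z) := by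
  have hpush : ∀ t, V (ψ t z) = fderiv ℝ (ψ t) z (V z) := fun t => by
    have hL := hφ.hasDerivAt 0 (ψ t z)
    rw [hφ.apply_zero] at hL
    have hR := (hψ.hasFDerivAt_apply t z).comp_hasDerivAt_of_eq 0 (hφ.hasDerivAt 0 z) (hφ.apply_zero z).symm
    rw [hφ.apply_zero, ← (hψ.hasFDerivAt_apply t z).fderiv] at hR
    exact hL.unique (funext (fun s => hcomm s t) ▸ hR)
  have hL := (hφ.contDiff_vectorField.differentiable (by simp) z).hasFDerivAt.comp_hasDerivAt_of_eq
    0 (hψ.hasDerivAt 0 z) (hψ.apply_zero z).symm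
  simp only [Function.comp_def, hpush, hψ.apply_zero] at hL
  have hR := hψ.hasDerivAt_fderiv_apply z (V z) 0
  rw [hψ.apply_zero, hψ.fderiv_zero] at hR
  exact hL.unique hR

end IsFlow

end Flow

section Division

variable {E : Type*} [NormedAddCommGroup E] [NormedSpace ℝ E]

theorem frequently_ne_zero_of_fderiv_ne_zero {P : E → ℝ} {z : E} (h : fderiv ℝ P z ≠ 0) :
    ∃ᶠ w in 𝓝 z, P w ≠ 0 := by
  contrapose! h
  have hP : P =ᶠ[𝓝 z] fun _ => (0 : ℝ) := h
  exact hP.fderiv_eq.trans (fderiv_const_apply 0)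

theorem fderiv_sq_mul_eq_zero {P F : E → ℝ} {z : E} (hP : DifferentiableAt ℝ P z)
    (hF : DifferentiableAt ℝ F z) (hz : P z = 0) :
    fderiv ℝ (fun y => P y ^ 2 * F y) z = 0 := by
  have h : HasFDerivAt (fun y => P y ^ 2 * F y) _ z := (hP.hasFDerivAt.pow 2).mul hF.hasFDerivAt
  rw [h.fderiv]
  simp [hz]

variable [FiniteDimensional ℝ E]

theorem contDiff_parametric_intervalIntegral {F : Type*} [NormedAddCommGroup F]
    [NormedSpace ℝ F] [CompleteSpace F] {m : ℕ} {K : E × ℝ → F} (hK : ContDiff ℝ m K)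
    (a b : ℝ) : ContDiff ℝ m fun z => ∫ t in a..b, K (z, t) := by
  induction m generalizing K with
  | zero =>
    rw [Nat.cast_zero, contDiff_zero] at hK ⊢
    exact intervalIntegral.continuous_parametric_intervalIntegral_of_continuous'
      (by exact hK.comp (continuous_fst.prodMk continuous_snd)) a b
  | succ m ih =>
    have hslice : ∀ z, Continuous fun t => K (z, t) := fun z =>
      hK.continuous.comp (continuous_const.prodMk continuous_id)
    have hK' : ContDiff ℝ m fun q => (fderiv ℝ K q).comp (ContinuousLinearMap.inl ℝ E ℝ) :=
      ((ContinuousLinearMap.compL ℝ E (E × ℝ) F).flip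
        (ContinuousLinearMap.inl ℝ E ℝ)).contDiff.comp (hK.fderiv_right (by push_cast; rfl))
    have hderiv : ∀ z₀, HasFDerivAt (fun z => ∫ t in a..b, K (z, t))
        (∫ t in a..b, (fderiv ℝ K (z₀, t)).comp (ContinuousLinearMap.inl ℝ E ℝ)) z₀ := by
      intro z₀
      obtain ⟨C, hC⟩ := ((isCompact_closedBall z₀ 1).prod
        isCompact_uIcc).exists_bound_of_continuousOn
          (hK'.continuous.continuousOn (s := closedBall z₀ 1 ×ˢ uIcc a b))
      refine intervalIntegral.hasFDerivAt_integral_of_dominated_of_fderiv_le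
        (F' := fun z t => (fderiv ℝ K (z, t)).comp (ContinuousLinearMap.inl ℝ E ℝ))
        (bound := fun _ => C) (ball_mem_nhds z₀ one_pos)
        (Eventually.of_forall fun z => (hslice z).aestronglyMeasurable)
        ((hslice z₀).intervalIntegrable a b)
        (hK'.continuous.comp (continuous_const.prodMk continuous_id)).aestronglyMeasurable
        (Eventually.of_forall fun t ht z hz =>
          hC (z, t) ⟨ball_subset_closedBall hz, uIoc_subset_uIcc ht⟩)
        intervalIntegrable_const (Eventually.of_forall fun t _ z _ => ?_)
      exact (hK.differentiable (by simp) (z, t)).hasFDerivAt.comp z (hasFDerivAt_prodMk_left z t)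
    rw [Nat.cast_succ, contDiff_succ_iff_fderiv_apply]
    refine ⟨fun z => (hderiv z).differentiableAt, by simp, fun y => ?_⟩
    have happly : ∀ z, fderiv ℝ (fun z => ∫ t in a..b, K (z, t)) z y =
        ∫ t in a..b, fderiv ℝ K (z, t) (y, 0) := fun z => by
      have hint : IntervalIntegrable
          (fun t => (fderiv ℝ K (z, t)).comp (ContinuousLinearMap.inl ℝ E ℝ)) volume a b :=
        (hK'.continuous.comp (continuous_const.prodMk continuous_id)).intervalIntegrable a b
      rw [(hderiv z).fderiv, ContinuousLinearMap.intervalIntegral_apply hint]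
      rfl
    rw [funext happly]
    exact ih ((hK.fderiv_right (by push_cast; rfl)).clm_apply contDiff_const)

/-- `G y = ∫₀¹ Dg(y - (1 - t) s(y) v) v dt`, by the fundamental theorem of calculus. -/
theorem exists_contDiff_eq_add_mul {m : ℕ} {g s : E → ℝ} (hg : ContDiff ℝ (m + 1) g)
    (hs : ContDiff ℝ m s) (v : E) :
    ∃ G : E → ℝ, ContDiff ℝ m G ∧ ∀ y, g y = g (y - s y • v) + s y * G y := by
  have hdg : ContDiff ℝ m (fderiv ℝ g) := hg.fderiv_right le_rfl
  refine ⟨fun y => ∫ t in (0 : ℝ)..1, fderiv ℝ g (y - (1 - t) • s y • v) v,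
    contDiff_parametric_intervalIntegral ((hdg.comp (contDiff_fst.sub
      ((contDiff_const.sub contDiff_snd).smul ((hs.comp contDiff_fst).smul
        contDiff_const)))).clm_apply contDiff_const) 0 1, fun y => ?_⟩
  have hcurve : ∀ t : ℝ, HasDerivAt (fun t : ℝ => y - (1 - t) • s y • v) (s y • v) t :=
    fun t => by
      simpa using ((hasDerivAt_const t (1 : ℝ)).sub (hasDerivAt_id t)).smul_const (s y • v)
        |>.const_sub y
  have hftc := intervalIntegral.integral_eq_sub_of_hasDerivAt
    (f := fun t : ℝ => g (y - (1 - t) • s y • v))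
    (fun t _ => (hg.differentiable (by simp) _).hasFDerivAt.comp_hasDerivAt t (hcurve t))
    (((hdg.continuous.comp (continuous_const.sub ((continuous_const.sub continuous_id).smul
      continuous_const))).clm_apply continuous_const).intervalIntegrable 0 1)
  simp only [map_smul, smul_eq_mul, intervalIntegral.integral_const_mul, sub_self, zero_smul,
    sub_zero, one_smul] at hftc
  rw [hftc]
  ring

/-- `g = χ • (B ∘ Θ⁻¹)` for a local inverse `Θ⁻¹` and a bump function `χ` at `Θ z₀`. -/
theorem exists_contDiff_eventually_comp_eq {F : Type*} [NormedAddCommGroup F] [NormedSpace ℝ F]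
    {Θ : E → E} (hΘ : ContDiff ℝ ∞ Θ) {z₀ : E} {e : E ≃L[ℝ] E}
    (hΘ' : HasFDerivAt Θ (e : E →L[ℝ] E) z₀) {B : E → F} (hB : ContDiff ℝ ∞ B) (m : ℕ) :
    ∃ g : E → F, ContDiff ℝ m g ∧ (∀ᶠ z in 𝓝 z₀, g (Θ z) = B z) ∧
      ∀ᶠ y in 𝓝 (Θ z₀), ∃ z, Θ z = y ∧ g y = B z := by
  have hΘm : ContDiffAt ℝ (m + 1) Θ z₀ := (hΘ.of_le (by exact_mod_cast le_top)).contDiffAt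
  have hstrict := hΘm.hasStrictFDerivAt' hΘ' (by simp)
  set ψ := hΘm.localInverse hΘ' (by simp)
  obtain ⟨u, hu, hψu⟩ := (hΘm.to_localInverse hΘ' (by simp)).contDiffOn (m := m)
    (by exact_mod_cast le_self_add) (by simp)
  obtain ⟨r, hr, hball⟩ : ∃ r > 0, closedBall (Θ z₀) r ⊆ interior u ∩ {y | Θ (ψ y) = y} :=
    nhds_basis_closedBall.mem_iff.1 (inter_mem (interior_mem_nhds.2 hu)
      hstrict.eventually_right_inverse)
  let χ : ContDiffBump (Θ z₀) := ⟨r / 2, r, half_pos hr, half_lt_self hr⟩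
  refine ⟨fun y => χ y • B (ψ y), ?_, ?_⟩
  · refine contDiff_iff_contDiffAt.2 fun y => ?_
    by_cases hy : y ∈ interior u
    · exact χ.contDiff.contDiffAt.smul ((hB.of_le (by exact_mod_cast le_top)).contDiffAt.comp
        y ((hψu.mono interior_subset).contDiffAt (isOpen_interior.mem_nhds hy)))
    · have hχ : y ∉ tsupport χ := fun h => hy (hball (χ.tsupport_eq ▸ h)).1
      refine contDiffAt_const (c := (0 : F)).congr_of_eventuallyEq ?_
      filter_upwards [(isClosed_tsupport _).isOpen_compl.mem_nhds hχ] with w hw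
      simp [image_eq_zero_of_notMem_tsupport hw]
  have hnear : ∀ᶠ y in 𝓝 (Θ z₀), χ y • B (ψ y) = B (ψ y) ∧ Θ (ψ y) = y := by
    filter_upwards [ball_mem_nhds _ (half_pos hr)] with y hy
    exact ⟨by rw [χ.one_of_mem_closedBall (ball_subset_closedBall hy), one_smul],
      (hball (closedBall_subset_closedBall (half_lt_self hr).le
        (ball_subset_closedBall hy))).2⟩
  refine ⟨?_, hnear.mono fun y hy => ⟨ψ y, hy.2, hy.1⟩⟩
  filter_upwards [hΘ.continuous.continuousAt.eventually hnear, hstrict.eventually_left_inverse]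
    with z hz hleft
  rw [hz.1]
  exact congrArg B hleft

/-- Straighten `P` to the linear form `ℓ = dP(z₀)` by `Θ z = z + (P z - ℓ z) • v` with
`ℓ v = 1`, and divide by `ℓ` along `v`. -/
theorem exists_contDiff_eventually_eq_mul {P B : E → ℝ} (hP : ContDiff ℝ ∞ P)
    (hB : ContDiff ℝ ∞ B) (hB0 : ∀ z, P z = 0 → B z = 0) {z₀ : E} (hz₀ : P z₀ = 0)
    (hreg : fderiv ℝ P z₀ ≠ 0) (m : ℕ) :
    ∃ G : E → ℝ, ContDiff ℝ m G ∧ ∀ᶠ z in 𝓝 z₀, B z = P z * G z := by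
  set ℓ := fderiv ℝ P z₀
  obtain ⟨a, ha⟩ : ∃ a, ℓ a ≠ 0 := by
    by_contra! h
    exact hreg (ContinuousLinearMap.ext h)
  set v := (ℓ a)⁻¹ • a
  have hv : ℓ v = 1 := by simp [v, ha]
  set Θ : E → E := fun z => z + (P z - ℓ z) • v
  have hΘℓ : ∀ z, ℓ (Θ z) = P z := fun z => by simp [Θ, hv]
  have hΘ : ContDiff ℝ ∞ Θ := contDiff_id.add ((hP.sub ℓ.contDiff).smul contDiff_const)
  have hΘ' : HasFDerivAt Θ ((ContinuousLinearEquiv.refl ℝ E : E ≃L[ℝ] E) : E →L[ℝ] E) z₀ := by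
    refine ((hasFDerivAt_id z₀).add (((hP.differentiable (by simp) z₀).hasFDerivAt.sub
      ℓ.hasFDerivAt).smul_const v)).congr_fderiv ?_
    ext w
    simp [ℓ]
  obtain ⟨g, hg, hgΘ, hgψ⟩ := exists_contDiff_eventually_comp_eq hΘ hΘ' hB (m + 1)
  obtain ⟨G, hG, hgG⟩ := exists_contDiff_eq_add_mul (s := ℓ) hg ℓ.contDiff v
  have hg0 : ∀ᶠ y in 𝓝 (Θ z₀), ℓ y = 0 → g y = 0 :=
    hgψ.mono fun y ⟨z, hzy, hgz⟩ hy => hgz.trans (hB0 z (by rw [← hΘℓ, hzy, hy]))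
  have hfoot : Tendsto (fun z => Θ z - P z • v) (𝓝 z₀) (𝓝 (Θ z₀)) := by
    have h : Tendsto (fun z => Θ z - P z • v) (𝓝 z₀) (𝓝 (Θ z₀ - P z₀ • v)) :=
      (hΘ.continuous.sub (hP.continuous.smul continuous_const)).tendsto z₀
    rwa [hz₀, zero_smul, sub_zero] at h
  refine ⟨G ∘ Θ, hG.comp (hΘ.of_le (by exact_mod_cast le_top)), ?_⟩
  filter_upwards [hgΘ, hfoot.eventually hg0] with z hz hz'
  rw [← hz, hgG (Θ z), hΘℓ, hz' (by simp [hΘℓ, hv]), zero_add, Function.comp_apply]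

theorem exists_contDiff_eq_mul_of_eq_zero {P B : E → ℝ} (hP : ContDiff ℝ ∞ P)
    (hreg : ∀ z, P z = 0 → fderiv ℝ P z ≠ 0) (hB : ContDiff ℝ ∞ B)
    (hB0 : ∀ z, P z = 0 → B z = 0) :
    ∃ F : E → ℝ, ContDiff ℝ ∞ F ∧ ∀ z, B z = P z * F z := by
  -- on `{P = 0}`, `F` is the limit of `B / P`, which exists by the local division
  let F : E → ℝ := fun z =>
    if P z = 0 then limUnder (𝓝[{w | P w ≠ 0}] z) (fun w => B w / P w) else B z / P z
  have hF : ∀ z, P z ≠ 0 → F z = B z / P z := fun z hz => if_neg hz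
  refine ⟨F, contDiff_iff_contDiffAt.2 fun z => ?_, fun z => ?_⟩
  · by_cases hz : P z = 0
    · refine contDiffAt_infty.2 fun m => ?_
      obtain ⟨G, hG, hBG⟩ := exists_contDiff_eventually_eq_mul hP hB hB0 hz (hreg z hz) m
      refine hG.contDiffAt.congr_of_eventuallyEq ?_
      filter_upwards [hBG.eventually_nhds] with w hw
      by_cases hPw : P w = 0
      · have : (𝓝[{w | P w ≠ 0}] w).NeBot := mem_closure_iff_nhdsWithin_neBot.1
          (mem_closure_iff_frequently.2 (frequently_ne_zero_of_fderiv_ne_zero (hreg w hPw)))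
        refine (if_pos hPw).trans (Tendsto.limUnder_eq ?_)
        refine (hG.continuous.continuousAt.continuousWithinAt (s := {w | P w ≠ 0})).congr' ?_
        filter_upwards [nhdsWithin_le_nhds hw, self_mem_nhdsWithin] with w' hw' hPw'
        rw [hw', mul_div_cancel_left₀ _ hPw']
      · rw [hF w hPw, hw.self_of_nhds, mul_div_cancel_left₀ _ hPw]
    · exact (hB.contDiffAt.div hP.contDiffAt hz).congr_of_eventuallyEq
        (eventually_of_mem ((isOpen_ne.preimage hP.continuous).mem_nhds hz) hF)
  · by_cases hz : P z = 0
    · rw [hB0 z hz, hz, zero_mul]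
    · rw [hF z hz, mul_div_cancel₀ _ hz]

theorem exists_contDiff_eq_sq_mul_of_eq_zero {P B : E → ℝ} (hP : ContDiff ℝ ∞ P)
    (hreg : ∀ z, P z = 0 → fderiv ℝ P z ≠ 0) (hB : ContDiff ℝ ∞ B)
    (hB0 : ∀ z, P z = 0 → B z = 0) (hB1 : ∀ z, P z = 0 → fderiv ℝ B z = 0) :
    ∃ F : E → ℝ, ContDiff ℝ ∞ F ∧ ∀ z, B z = P z ^ 2 * F z := by
  obtain ⟨F₁, hF₁, hBF₁⟩ := exists_contDiff_eq_mul_of_eq_zero hP hreg hB hB0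
  -- on `{P = 0}`, `dB = F₁ dP` and `dP ≠ 0`, so `F₁` vanishes there too
  have hF₁0 : ∀ z, P z = 0 → F₁ z = 0 := fun z hz => by
    have hd : fderiv ℝ B z = P z • fderiv ℝ F₁ z + F₁ z • fderiv ℝ P z := by
      rw [funext hBF₁]
      exact ((hP.differentiable (by simp) z).hasFDerivAt.mul
        (hF₁.differentiable (by simp) z).hasFDerivAt).fderiv
    rw [hB1 z hz, hz, zero_smul, zero_add, eq_comm, smul_eq_zero] at hd
    exact hd.resolve_right (hreg z hz)
  obtain ⟨F₂, hF₂, hF₁F₂⟩ := exists_contDiff_eq_mul_of_eq_zero hP hreg hF₁ hF₁0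
  exact ⟨F₂, hF₂, fun z => by rw [hBF₁, hF₁F₂]; ring⟩

end Division

section Hamiltonian

variable {n : ℕ}

abbrev PhaseSpace (n : ℕ) : Type := (Fin n → ℝ) × (Fin n → ℝ)

/-- `J L = (∂ₚL, -∂ₓL)`, so that `Ξ_P z = J (dP z)`. -/
def symplecticGrad (n : ℕ) : (PhaseSpace n →L[ℝ] ℝ) →L[ℝ] PhaseSpace n :=
  (ContinuousLinearMap.pi fun i =>
      ContinuousLinearMap.apply ℝ ℝ ((0, Pi.single i 1) : PhaseSpace n)).prod
    (ContinuousLinearMap.pi fun i =>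
      -ContinuousLinearMap.apply ℝ ℝ ((Pi.single i 1, 0) : PhaseSpace n))

theorem hamVectorField_eq_symplecticGrad (P : PhaseSpace n → ℝ) (z : PhaseSpace n) :
    hamVectorField n P z = symplecticGrad n (fderiv ℝ P z) :=
  rfl

theorem apply_eq_sum {F : Type*} [NormedAddCommGroup F] [NormedSpace ℝ F]
    (L : PhaseSpace n →L[ℝ] F) (w : PhaseSpace n) :
    L w = ∑ i, (w.1 i • L (Pi.single i 1, 0) + w.2 i • L (0, Pi.single i 1)) := by
  have hw : w = ∑ i, (w.1 i • ((Pi.single i 1, 0) : PhaseSpace n) +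
      w.2 i • (0, Pi.single i 1)) := by
    ext j <;> simp [Prod.fst_sum, Prod.snd_sum, Finset.sum_apply, Pi.single_apply]
  conv_lhs => rw [hw]
  simp only [map_sum, map_add, map_smul]

theorem apply_symplecticGrad (L M : PhaseSpace n →L[ℝ] ℝ) :
    L (symplecticGrad n M) = ∑ i, (M (0, Pi.single i 1) * L (Pi.single i 1, 0) -
      M (Pi.single i 1, 0) * L (0, Pi.single i 1)) := by
  rw [apply_eq_sum L]
  simp [symplecticGrad, sub_eq_add_neg]

theorem apply_symplecticGrad_comm (L M : PhaseSpace n →L[ℝ] ℝ) :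
    L (symplecticGrad n M) = -M (symplecticGrad n L) := by
  rw [apply_symplecticGrad, apply_symplecticGrad, ← Finset.sum_neg_distrib]
  exact Finset.sum_congr rfl fun i _ => by ring

theorem symplecticGrad_injective : Function.Injective (symplecticGrad n) := by
  refine (injective_iff_map_eq_zero _).2 fun L hL => ContinuousLinearMap.ext fun w => ?_
  have h1 : ∀ i, L (0, Pi.single i 1) = 0 := fun i => congrFun (congrArg Prod.fst hL) i
  have h2 : ∀ i, L (Pi.single i 1, 0) = 0 := fun i => by
    simpa [symplecticGrad] using congrFun (congrArg Prod.snd hL) i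
  simp [apply_eq_sum L w, h1, h2]

theorem poissonBracket_eq_fderiv_apply_hamVectorField (P Q : PhaseSpace n → ℝ)
    (z : PhaseSpace n) : poissonBracket n P Q z = fderiv ℝ Q z (hamVectorField n P z) := by
  rw [hamVectorField_eq_symplecticGrad, apply_symplecticGrad]
  rfl

theorem fderiv_apply_hamVectorField (P Q : PhaseSpace n → ℝ) (z : PhaseSpace n) :
    fderiv ℝ P z (hamVectorField n Q z) = -poissonBracket n P Q z := by
  rw [poissonBracket_eq_fderiv_apply_hamVectorField, hamVectorField_eq_symplecticGrad,
    hamVectorField_eq_symplecticGrad, apply_symplecticGrad_comm]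

theorem fderiv_apply_hamVectorField_self (P : PhaseSpace n → ℝ) (z : PhaseSpace n) :
    fderiv ℝ P z (hamVectorField n P z) = 0 := by
  have h := fderiv_apply_hamVectorField P P z
  rw [poissonBracket_eq_fderiv_apply_hamVectorField] at h
  linarith

variable {P Q : PhaseSpace n → ℝ}

theorem hasFDerivAt_hamVectorField (hP : ContDiff ℝ 2 P) (z : PhaseSpace n) :
    HasFDerivAt (hamVectorField n P) ((symplecticGrad n).comp (fderiv ℝ (fderiv ℝ P) z)) z :=
  (symplecticGrad n).hasFDerivAt.comp z
    ((hP.fderiv_right (m := 1) (by norm_num)).differentiable (by simp) z).hasFDerivAt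

theorem fderiv_hamVectorField_apply (hP : ContDiff ℝ 2 P) (z w : PhaseSpace n) :
    fderiv ℝ (hamVectorField n P) z w = symplecticGrad n (fderiv ℝ (fderiv ℝ P) z w) := by
  rw [(hasFDerivAt_hamVectorField hP z).fderiv]
  rfl

theorem contDiff_poissonBracket (hP : ContDiff ℝ ∞ P) (hQ : ContDiff ℝ ∞ Q) :
    ContDiff ℝ ∞ (poissonBracket n P Q) := by
  rw [funext (poissonBracket_eq_fderiv_apply_hamVectorField P Q)]
  exact (hQ.fderiv_right (by norm_num)).clm_apply
    ((symplecticGrad n).contDiff.comp (hP.fderiv_right (by norm_num)))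

theorem fderiv_poissonBracket_apply (hP : ContDiff ℝ 2 P) (hQ : ContDiff ℝ 2 Q)
    (z a : PhaseSpace n) :
    fderiv ℝ (poissonBracket n P Q) z a = fderiv ℝ (fderiv ℝ Q) z (hamVectorField n P z) a -
      fderiv ℝ (fderiv ℝ P) z (hamVectorField n Q z) a := by
  have hdQ := (hQ.fderiv_right (m := 1) (by norm_num)).differentiable (by simp) z
  rw [funext (poissonBracket_eq_fderiv_apply_hamVectorField P Q),
    (hdQ.hasFDerivAt.clm_apply (hasFDerivAt_hamVectorField hP z)).fderiv]
  simp only [add_apply, ContinuousLinearMap.comp_apply, ContinuousLinearMap.flip_apply]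
  rw [hQ.contDiffAt.isSymmSndFDerivAt (by simp) a, apply_symplecticGrad_comm,
    ← hamVectorField_eq_symplecticGrad, hP.contDiffAt.isSymmSndFDerivAt (by simp) a]
  ring

theorem fderiv_hamVectorField_sub (hP : ContDiff ℝ 2 P) (hQ : ContDiff ℝ 2 Q)
    (z : PhaseSpace n) :
    fderiv ℝ (hamVectorField n Q) z (hamVectorField n P z) -
      fderiv ℝ (hamVectorField n P) z (hamVectorField n Q z) =
        hamVectorField n (poissonBracket n P Q) z := by
  rw [fderiv_hamVectorField_apply hQ, fderiv_hamVectorField_apply hP, ← map_sub,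
    hamVectorField_eq_symplecticGrad (poissonBracket n P Q)]
  refine congrArg _ (ContinuousLinearMap.ext fun a => ?_)
  rw [fderiv_poissonBracket_apply hP hQ]
  rfl

theorem fderiv_hamVectorField_comm_iff (hP : ContDiff ℝ 2 P) (hQ : ContDiff ℝ 2 Q)
    (z : PhaseSpace n) :
    fderiv ℝ (hamVectorField n P) z (hamVectorField n Q z) =
        fderiv ℝ (hamVectorField n Q) z (hamVectorField n P z) ↔
      fderiv ℝ (poissonBracket n P Q) z = 0 := by
  rw [eq_comm, ← sub_eq_zero, fderiv_hamVectorField_sub hP hQ, hamVectorField_eq_symplecticGrad,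
    ← map_zero (symplecticGrad n), symplecticGrad_injective.eq_iff]

theorem IsHamFlow.isFlow {φ : ℝ → PhaseSpace n → PhaseSpace n} (hφ : IsHamFlow n P φ) :
    IsFlow (hamVectorField n P) φ :=
  hφ

end Hamiltonian

/-- for smooth `P, Q` with `0` a regular value of `P` and
`{P,Q} = 0` on `Z = P⁻¹(0)`, with global Hamiltonian flows `φP, φQ`, the flows
commute on `Z` if and only if `{P,Q}` vanishes to second order at `Z`, i.e.
`{P,Q} = P² F` for some smooth `F`. -/
theorem statement11 (n : ℕ) (P Q : (Fin n → ℝ) × (Fin n → ℝ) → ℝ)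
    (hP : ContDiff ℝ (⊤ : ℕ∞) P) (hQ : ContDiff ℝ (⊤ : ℕ∞) Q)
    (hreg : ∀ z, P z = 0 → fderiv ℝ P z ≠ 0)
    (htan : ∀ z, P z = 0 → poissonBracket n P Q z = 0)
    (φP φQ : ℝ → (Fin n → ℝ) × (Fin n → ℝ) → (Fin n → ℝ) × (Fin n → ℝ))
    (hφP : IsHamFlow n P φP) (hφQ : IsHamFlow n Q φQ) :
    (∀ z, P z = 0 → ∀ s t : ℝ, φP s (φQ t z) = φQ t (φP s z)) ↔
      (∃ F : (Fin n → ℝ) × (Fin n → ℝ) → ℝ, ContDiff ℝ (⊤ : ℕ∞) F ∧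
        ∀ z, poissonBracket n P Q z = (P z) ^ 2 * F z) := by
  have hP₂ : ContDiff ℝ 2 P := hP.of_le (WithTop.coe_le_coe.2 le_top)
  have hQ₂ : ContDiff ℝ 2 Q := hQ.of_le (WithTop.coe_le_coe.2 le_top)
  constructor
  · intro hcomm
    refine exists_contDiff_eq_sq_mul_of_eq_zero hP hreg (contDiff_poissonBracket hP hQ) htan
      fun z hz => (fderiv_hamVectorField_comm_iff hP₂ hQ₂ z).1 ?_
    exact hφP.isFlow.lie_eq_of_apply_comm hφQ.isFlow (hcomm z hz)
  · rintro ⟨F, hF, hPQ⟩ z hz s t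
    have hPd : Differentiable ℝ P := hP.differentiable (by simp)
    have hZQ : ∀ t, P (φQ t z) = 0 :=
      hφQ.isFlow.apply_eq_zero_of_fderiv_apply_eq_mul hPd (g := fun y => -(P y * F y))
        (hP.continuous.mul hF.continuous).neg
        (fun y => by rw [fderiv_apply_hamVectorField, hPQ]; ring) hz
    have hZP : ∀ y, P y = 0 → ∀ s, P (φP s y) = 0 := fun y hy =>
      hφP.isFlow.apply_eq_zero_of_fderiv_apply_eq_mul hPd (g := 0) continuous_const
        (fun y => by rw [fderiv_apply_hamVectorField_self, Pi.zero_apply, zero_mul]) hy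
    refine hφP.isFlow.apply_comm_of_lie hφQ.isFlow (fun s t => ?_) s t
    refine (fderiv_hamVectorField_comm_iff hP₂ hQ₂ _).2 ?_
    rw [funext hPQ]
    exact fderiv_sq_mul_eq_zero (hPd _) (hF.differentiable (by simp) _) (hZP _ (hZQ t) s)
end
end
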